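/- arXiv:0710.1902 — 6 statements merged into one kernel-verified Lean document; each statement's English description precedes it below -/
import Mathlib

section
/- If f = g ∘ h where f is a nonconstant complex Laurent polynomial (a rational function whose only possible poles are 0 and ∞) and g, h ∈ ℂ(x), then there exists a degree-one rational function μ ∈ ℂ(x) such that, setting G = g ∘ μ and H = μ^{−1} ∘ h, either (1) G is a polynomial and H is a Laurent polynomial, or (2) G is a Laurent polynomial and H = x^n for some positive integer n. -/
open Polynomial

noncomputable def rcomp (f g : RatFunc ℂ) : RatFunc ℂ :=
  RatFunc.eval (algebraMap ℂ (RatFunc ℂ)) g f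

/-- A Laurent polynomial: a rational function whose only poles are `0` and `∞`. -/
def IsLaurent (f : RatFunc ℂ) : Prop :=
  ∃ (p : Polynomial ℂ) (k : ℕ),
    f = algebraMap (Polynomial ℂ) (RatFunc ℂ) p / RatFunc.X ^ k

/-- A degree-one (Möbius) rational function. -/
def IsMobius (μ : RatFunc ℂ) : Prop :=
  ∃ a b c d : ℂ, a * d - b * c ≠ 0 ∧
    μ = (RatFunc.C a * RatFunc.X + RatFunc.C b) / (RatFunc.C c * RatFunc.X + RatFunc.C d)

/-!
Write `h = p / q` in lowest terms and, for a point `P = [x : y]` of the Riemann sphere, let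
`fiber p q P = y p - x q`; its zeros are the finite points of `h⁻¹(P)`, fibers over distinct
points are coprime, and two of them can only both be constant if `h` is. Factoring `g` over the
roots of its numerator and denominator, `g ∘ h` is a quotient whose denominator is the product of
the fibers of `h` over the poles of `g`, and these fibers are coprime to the numerator. Since
`f = g ∘ h` has only the poles `0` and `∞`, every such fiber divides a power of `X`, i.e. is a
monomial `c Xᵉ`. Two coprime monomials are not both divisible by `X`, so `g` has at most two poles,
and if it has two, the fiber over one of them is `c₁ Xⁿ` with `n > 0` and over the other a
constant `c₂`.

With a single pole, a Möbius `μ` sending `∞` to it makes `g ∘ μ` a polynomial, and the denominator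
of `μ⁻¹ ∘ h` is the fiber of `h` over that pole, a monomial. With two poles, `μ⁻¹` sends them to
`0` and `∞`, scaled so that `μ⁻¹ ∘ h = (c₂ · fiber₁) / (c₁ · fiber₂) = Xⁿ`, and the same
factorization applied to `g ∘ μ` shows that its only poles are `0` and `∞`.
-/

open OnePoint

namespace LaurentDecomposition

local notation "alg" => algebraMap ℂ[X] (RatFunc ℂ)

-- `∞` is represented by `(-1, 0)` rather than `(1, 0)` so that `fiber u v ∞ = v`.
def homCoords (P : OnePoint ℂ) : ℂ × ℂ := P.elim (-1, 0) fun w => (w, 1)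

@[simp] lemma homCoords_coe (w : ℂ) : homCoords w = (w, 1) := rfl

@[simp] lemma homCoords_infty : homCoords ∞ = (-1, 0) := rfl

lemma homCoords_det_ne_zero {P P' : OnePoint ℂ} (h : P ≠ P') :
    (homCoords P).1 * (homCoords P').2 - (homCoords P').1 * (homCoords P).2 ≠ 0 := by
  induction P with
  | infty => induction P' with
    | infty => exact absurd rfl h
    | coe w => simp
  | coe w => induction P' with
    | infty => simp
    | coe w' => simpa [sub_eq_zero] using fun e => h (by rw [e])

noncomputable def fiber (u v : ℂ[X]) (P : OnePoint ℂ) : ℂ[X] :=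
  C (homCoords P).2 * u - C (homCoords P).1 * v

section Fiber

variable {u v : ℂ[X]}

@[simp] lemma fiber_coe (w : ℂ) : fiber u v w = u - C w * v := by simp [fiber]

@[simp] lemma fiber_infty : fiber u v ∞ = v := by simp [fiber]

lemma fiber_linear (a b c d : ℂ) (P : OnePoint ℂ) :
    fiber (C a * X + C b) (C c * X + C d) P =
      C ((homCoords P).2 * a - (homCoords P).1 * c) * X +
        C ((homCoords P).2 * b - (homCoords P).1 * d) := by
  simp only [fiber, C_sub, C_mul]; ring

lemma isCoprime_C_mul_sub_C_mul (huv : IsCoprime u v) {x y x' y' : ℂ}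
    (hdet : x * y' - x' * y ≠ 0) :
    IsCoprime (C y * u - C x * v) (C y' * u - C x' * v) := by
  obtain ⟨a, b, hab⟩ := huv
  have hinv : C (x * y' - x' * y)⁻¹ * C (x * y' - x' * y) = 1 := by
    rw [← C_mul, inv_mul_cancel₀ hdet, C_1]
  refine ⟨-(a * C x' + b * C y') * C (x * y' - x' * y)⁻¹,
    (a * C x + b * C y) * C (x * y' - x' * y)⁻¹, ?_⟩
  simp only [C_sub, C_mul] at hinv ⊢
  linear_combination (C (x * y' - x' * y)⁻¹ * (C x * C y' - C x' * C y)) * hab + hinv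

lemma isCoprime_fiber (huv : IsCoprime u v) {P P' : OnePoint ℂ} (h : P ≠ P') :
    IsCoprime (fiber u v P) (fiber u v P') :=
  isCoprime_C_mul_sub_C_mul huv (homCoords_det_ne_zero h)

lemma exists_eq_C_of_C_mul_sub_C_mul_eq_C {x y x' y' c c' : ℂ} (hdet : x * y' - x' * y ≠ 0)
    (hc : C y * u - C x * v = C c) (hc' : C y' * u - C x' * v = C c') :
    ∃ k, alg u / alg v = RatFunc.C k := by
  refine ⟨(x * c' - x' * c) / (y * c' - y' * c), ?_⟩
  have hu : C (x * y' - x' * y) * u = C (x * c' - x' * c) := by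
    simp only [C_sub, C_mul]; linear_combination C x * hc' - C x' * hc
  have hv : C (x * y' - x' * y) * v = C (y * c' - y' * c) := by
    simp only [C_sub, C_mul]; linear_combination C y * hc' - C y' * hc
  have hδ : alg (C (x * y' - x' * y)) ≠ 0 :=
    RatFunc.algebraMap_ne_zero (C_ne_zero.mpr hdet)
  rw [← mul_div_mul_left _ _ hδ, ← map_mul, ← map_mul, hu, hv, RatFunc.algebraMap_C,
    RatFunc.algebraMap_C, map_div₀]

lemma exists_eq_C_of_fiber_eq_C {P P' : OnePoint ℂ} (h : P ≠ P') {c c' : ℂ}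
    (hc : fiber u v P = C c) (hc' : fiber u v P' = C c') : ∃ k, alg u / alg v = RatFunc.C k :=
  exists_eq_C_of_C_mul_sub_C_mul_eq_C (homCoords_det_ne_zero h) hc hc'

lemma fiber_ne_zero (hnc : ¬∃ k, alg u / alg v = RatFunc.C k) (hv : v ≠ 0) (P : OnePoint ℂ) :
    fiber u v P ≠ 0 := by
  induction P with
  | infty => simpa using hv
  | coe w =>
    intro h0
    refine hnc ⟨w, ?_⟩
    rw [fiber_coe, sub_eq_zero] at h0
    rw [h0, map_mul, RatFunc.algebraMap_C, mul_div_assoc,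
      div_self (RatFunc.algebraMap_ne_zero hv), mul_one]

end Fiber

lemma rcomp_eq_aeval_div (g t : RatFunc ℂ) : rcomp g t = aeval t g.num / aeval t g.denom := by
  simp only [rcomp, RatFunc.eval, aeval_def]

lemma rcomp_C_left (c : ℂ) (t : RatFunc ℂ) : rcomp (RatFunc.C c) t = RatFunc.C c := by
  rw [rcomp, RatFunc.eval_C, RatFunc.algebraMap_eq_C]

lemma rcomp_C_right (g : RatFunc ℂ) (c : ℂ) : ∃ k, rcomp g (RatFunc.C c) = RatFunc.C k :=
  ⟨g.num.eval c / g.denom.eval c, by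
    rw [rcomp_eq_aeval_div, ← RatFunc.algebraMap_eq_C,
      aeval_algebraMap_apply_eq_algebraMap_eval, aeval_algebraMap_apply_eq_algebraMap_eval,
      map_div₀]⟩

lemma rcomp_algebraMap_div {t : RatFunc ℂ} (ht : ¬∃ c, t = RatFunc.C c) (A B : ℂ[X]) :
    rcomp (alg A / alg B) t = aeval t A / aeval t B := by
  have hinj := transcendental_iff_injective.mp (RatFunc.transcendental_of_ne_C t ht)
  have hφ := nonZeroDivisors_le_comap_nonZeroDivisors_of_injective _ hinj
  rw [← RatFunc.liftAlgHom_apply_div _ hφ, RatFunc.liftAlgHom_apply, rcomp_eq_aeval_div]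

lemma aeval_algebraMap_div {u v : ℂ[X]} (hv : v ≠ 0) (r : ℂ[X]) :
    aeval (alg u / alg v) r =
      alg (C r.leadingCoeff * (r.roots.map fun z : ℂ => fiber u v z).prod) /
        alg v ^ r.natDegree := by
  have hv' : alg v ≠ 0 := RatFunc.algebraMap_ne_zero hv
  have hfactor (z : ℂ) : aeval (alg u / alg v) (X - C z) = alg (fiber u v z) / alg v := by
    rw [fiber_coe, aeval_sub, aeval_X, aeval_C, map_sub, map_mul, RatFunc.algebraMap_C,
      RatFunc.algebraMap_eq_C]
    field_simp
  conv_lhs =>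
    rw [← C_leadingCoeff_mul_prod_multiset_X_sub_C (p := r) IsAlgClosed.card_roots_eq_natDegree]
  simp only [map_mul, map_multiset_prod, Multiset.map_map, Function.comp_def, hfactor,
    Multiset.prod_map_div, Multiset.map_const', Multiset.prod_replicate,
    IsAlgClosed.card_roots_eq_natDegree, aeval_C, RatFunc.algebraMap_eq_C, RatFunc.algebraMap_C]
  ring

-- `g ∘ (u / v) = compNum g u v / compDenom g u v`. Of the two powers of `v`, at most one has a
-- nonzero exponent (truncated subtraction): it is the factor of the pole or zero of `g` at `∞`.
noncomputable def compNum (g : RatFunc ℂ) (u v : ℂ[X]) : ℂ[X] :=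
  C g.num.leadingCoeff *
    ((g.num.roots.map fun z : ℂ => fiber u v z).prod * v ^ (g.denom.natDegree - g.num.natDegree))

noncomputable def compDenom (g : RatFunc ℂ) (u v : ℂ[X]) : ℂ[X] :=
  (g.denom.roots.map fun w : ℂ => fiber u v w).prod * v ^ (g.num.natDegree - g.denom.natDegree)

lemma rcomp_div_eq (g : RatFunc ℂ) {u v : ℂ[X]} (hv : v ≠ 0) :
    rcomp g (alg u / alg v) = alg (compNum g u v) / alg (compDenom g u v) := by
  set m := min g.num.natDegree g.denom.natDegree with hm_def
  have hm : alg v ^ m ≠ 0 := pow_ne_zero _ (RatFunc.algebraMap_ne_zero hv)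
  have hnum : alg v ^ g.denom.natDegree =
      alg v ^ (g.denom.natDegree - g.num.natDegree) * alg v ^ m := by
    rw [← pow_add, hm_def, min_comm, tsub_add_min]
  have hden : alg v ^ g.num.natDegree =
      alg v ^ (g.num.natDegree - g.denom.natDegree) * alg v ^ m := by
    rw [← pow_add, hm_def, tsub_add_min]
  have hcancel (a b c d : RatFunc ℂ) :
      a * (b * alg v ^ m) / (c * alg v ^ m * d) = a * b / (d * c) := by
    rw [← mul_div_mul_right (a * b) (d * c) hm]; ring
  rw [rcomp_eq_aeval_div, aeval_algebraMap_div hv, aeval_algebraMap_div hv,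
    (RatFunc.monic_denom g).leadingCoeff, C_1, one_mul, div_div_div_eq, hnum, hden, hcancel]
  simp only [compNum, compDenom, map_mul, map_pow]
  ring

lemma C_mul_X_add_C_inj {a b a' b' : ℂ} :
    C a * X + C b = C a' * X + C b' ↔ a = a' ∧ b = b' := by
  refine ⟨fun h => ⟨?_, ?_⟩, fun ⟨ha, hb⟩ => by rw [ha, hb]⟩
  · simpa using congrArg (coeff · 1) h
  · simpa using congrArg (coeff · 0) h

noncomputable def mobius (a b c d : ℂ) : RatFunc ℂ := alg (C a * X + C b) / alg (C c * X + C d)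

section Mobius

variable {a b c d : ℂ}

lemma linear_ne_zero_of_det_ne_zero (hdet : a * d - b * c ≠ 0) : C c * X + C d ≠ 0 := by
  rw [Ne, show (0 : ℂ[X]) = C 0 * X + C 0 by simp, C_mul_X_add_C_inj]
  rintro ⟨rfl, rfl⟩
  simp at hdet

lemma isMobius_mobius (hdet : a * d - b * c ≠ 0) : IsMobius (mobius a b c d) :=
  ⟨a, b, c, d, hdet, by simp [mobius]⟩

lemma mobius_not_const (hdet : a * d - b * c ≠ 0) : ¬∃ k, mobius a b c d = RatFunc.C k := by
  rintro ⟨k, hk⟩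
  rw [mobius, div_eq_iff (RatFunc.algebraMap_ne_zero (linear_ne_zero_of_det_ne_zero hdet)),
    ← RatFunc.algebraMap_C, ← map_mul] at hk
  have h := RatFunc.algebraMap_injective ℂ hk
  rw [show C k * (C c * X + C d) = C (k * c) * X + C (k * d) by simp only [C_mul]; ring,
    C_mul_X_add_C_inj] at h
  apply hdet
  rw [h.1, h.2]
  ring

lemma rcomp_mobius {p q : ℂ[X]} (hq : q ≠ 0) (hnc : ¬∃ k, alg p / alg q = RatFunc.C k) :
    rcomp (mobius a b c d) (alg p / alg q) =
      alg (C a * p + C b * q) / alg (C c * p + C d * q) := by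
  have hq' : alg q ≠ 0 := RatFunc.algebraMap_ne_zero hq
  rw [mobius, rcomp_algebraMap_div hnc]
  simp only [map_add, map_mul, aeval_C, aeval_X, RatFunc.algebraMap_C, RatFunc.algebraMap_eq_C]
  rw [mul_div_assoc', mul_div_assoc', div_add' _ _ _ hq', div_add' _ _ _ hq',
    div_div_div_cancel_right₀ hq']

lemma det_inv_ne_zero (hdet : a * d - b * c ≠ 0) : d * a - -b * -c ≠ 0 := by
  contrapose! hdet; linear_combination hdet

lemma rcomp_mobius_mobius_inv (hdet : a * d - b * c ≠ 0) :
    rcomp (mobius a b c d) (mobius d (-b) (-c) a) = RatFunc.X := by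
  have hdet' := det_inv_ne_zero hdet
  rw [show mobius d (-b) (-c) a = alg (C d * X + C (-b)) / alg (C (-c) * X + C a) from rfl,
    rcomp_mobius (linear_ne_zero_of_det_ne_zero hdet') (mobius_not_const hdet'),
    show C a * (C d * X + C (-b)) + C b * (C (-c) * X + C a) = C (a * d - b * c) * X by
      simp only [C_sub, C_mul, C_neg]; ring,
    show C c * (C d * X + C (-b)) + C d * (C (-c) * X + C a) = C (a * d - b * c) by
      simp only [C_sub, C_mul, C_neg]; ring,
    map_mul, mul_div_cancel_left₀ _ (RatFunc.algebraMap_ne_zero (C_ne_zero.mpr hdet)),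
    RatFunc.algebraMap_X]

lemma mobius_inverse (hdet : a * d - b * c ≠ 0) :
    IsMobius (mobius d (-b) (-c) a) ∧
      rcomp (mobius d (-b) (-c) a) (mobius a b c d) = RatFunc.X ∧
      rcomp (mobius a b c d) (mobius d (-b) (-c) a) = RatFunc.X :=
  ⟨isMobius_mobius (det_inv_ne_zero hdet),
    by simpa using rcomp_mobius_mobius_inv (det_inv_ne_zero hdet), rcomp_mobius_mobius_inv hdet⟩

end Mobius

-- The coefficient may be `0`; for `IsLaurent (N / D)` this is harmless since `N / 0 = 0`.
def monomials (R : Type*) [CommSemiring R] : Submonoid R[X] where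
  carrier := {r | ∃ c n, r = C c * X ^ n}
  mul_mem' := by
    rintro _ _ ⟨c, n, rfl⟩ ⟨d, m, rfl⟩
    exact ⟨c * d, n + m, by rw [C_mul, pow_add]; ring⟩
  one_mem' := ⟨1, 0, by simp⟩

section Monomials

variable {R : Type*} [CommSemiring R] {r : R[X]}

lemma linear_mem_monomials {a b : R} (h : a = 0 ∨ b = 0) : C a * X + C b ∈ monomials R := by
  rcases h with rfl | rfl
  · exact ⟨b, 0, by simp⟩
  · exact ⟨a, 1, by simp⟩

lemma exists_eq_C_of_not_X_dvd (hr : r ∈ monomials R) (hX : ¬X ∣ r) : ∃ c, r = C c := by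
  obtain ⟨c, n, rfl⟩ := hr
  cases n with
  | zero => exact ⟨c, by simp⟩
  | succ n => exact absurd (dvd_mul_of_dvd_right (dvd_pow_self X n.succ_ne_zero) _) hX

lemma exists_eq_C_mul_X_pow_of_X_dvd (hr : r ∈ monomials R) (hX : X ∣ r) (hr0 : r ≠ 0) :
    ∃ c n, 0 < n ∧ r = C c * X ^ n := by
  obtain ⟨c, n, rfl⟩ := hr
  refine ⟨c, n, Nat.pos_of_ne_zero ?_, rfl⟩
  rintro rfl
  rw [pow_zero, mul_one, X_dvd_iff, coeff_C_zero] at hX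
  exact hr0 (by simp [hX])

lemma mem_monomials_of_dvd_X_pow {R : Type*} [CommRing R] [IsDomain R] {r : R[X]} {k : ℕ}
    (h : r ∣ X ^ k) : r ∈ monomials R := by
  obtain ⟨i, -, hi⟩ := (dvd_prime_pow prime_X k).mp h
  obtain ⟨u, hu⟩ := hi.symm
  obtain ⟨c, -, hc⟩ := Polynomial.isUnit_iff.mp u.isUnit
  exact ⟨c, i, by rw [← hu, ← hc, mul_comm]⟩

end Monomials

lemma isLaurent_div_of_mem_monomials (N : ℂ[X]) {D : ℂ[X]} (hD : D ∈ monomials ℂ) :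
    IsLaurent (alg N / alg D) := by
  obtain ⟨c, n, rfl⟩ := hD
  refine ⟨C c⁻¹ * N, n, ?_⟩
  simp only [map_mul, map_pow, RatFunc.algebraMap_C, RatFunc.algebraMap_X, map_inv₀]
  ring

lemma exists_algebraMap_eq_div_of_mem_mrange_C (N : ℂ[X]) {D : ℂ[X]}
    (hD : D ∈ MonoidHom.mrange (C : ℂ →+* ℂ[X])) : ∃ p, alg N / alg D = alg p := by
  obtain ⟨c, rfl⟩ := hD
  refine ⟨C c⁻¹ * N, ?_⟩
  simp only [map_mul, RatFunc.algebraMap_C, map_inv₀]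
  ring

lemma mem_monomials_of_isLaurent_div {N D d : ℂ[X]} (hf : IsLaurent (alg N / alg D))
    (hD : D ≠ 0) (hd : d ∣ D) (hcop : IsCoprime d N) : d ∈ monomials ℂ := by
  obtain ⟨P, k, hPk⟩ := hf
  rw [div_eq_div_iff (RatFunc.algebraMap_ne_zero hD) (pow_ne_zero _ RatFunc.X_ne_zero),
    ← RatFunc.algebraMap_X, ← map_pow, ← map_mul, ← map_mul] at hPk
  have hNk : N * X ^ k = P * D := RatFunc.algebraMap_injective ℂ hPk
  exact mem_monomials_of_dvd_X_pow (hcop.dvd_of_dvd_mul_left (hNk ▸ hd.mul_left P))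

def IsPole (g : RatFunc ℂ) (P : OnePoint ℂ) : Prop :=
  P.elim (g.denom.natDegree < g.num.natDegree) g.denom.IsRoot

section Poles

variable {g : RatFunc ℂ} {u v : ℂ[X]} {P : OnePoint ℂ}

@[simp] lemma isPole_infty : IsPole g ∞ ↔ g.denom.natDegree < g.num.natDegree := Iff.rfl

@[simp] lemma isPole_coe (w : ℂ) : IsPole g w ↔ g.denom.IsRoot w := Iff.rfl

lemma exists_isPole (hg : ¬∃ c, g = RatFunc.C c) : ∃ P, IsPole g P := by
  by_contra! h
  have hroots : g.denom.roots = 0 := Multiset.eq_zero_of_forall_notMem fun w hw =>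
    h w ((mem_roots g.denom_ne_zero).mp hw)
  have hdenom : g.denom = 1 := (RatFunc.monic_denom g).natDegree_eq_zero.mp (by
    rw [← IsAlgClosed.card_roots_eq_natDegree, hroots, Multiset.card_zero])
  have hnum : g.num.natDegree = 0 := by simpa [hdenom] using h ∞
  refine hg ⟨g.num.coeff 0, ?_⟩
  conv_lhs => rw [← RatFunc.num_div_denom g, hdenom, eq_C_of_natDegree_eq_zero hnum]
  rw [map_one, div_one, RatFunc.algebraMap_C]

lemma compDenom_mem (M : Submonoid ℂ[X]) (h : ∀ P, IsPole g P → fiber u v P ∈ M) :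
    compDenom g u v ∈ M := by
  refine M.mul_mem (M.multiset_prod_mem _ ?_) ?_
  · simp only [Multiset.mem_map]
    rintro _ ⟨w, hw, rfl⟩
    exact h w (isRoot_of_mem_roots hw)
  · rcases Nat.eq_zero_or_pos (g.num.natDegree - g.denom.natDegree) with h0 | hpos
    · rw [h0, pow_zero]
      exact M.one_mem
    · exact M.pow_mem (by simpa using h ∞ (by simpa using hpos)) _

lemma fiber_dvd_compDenom (hP : IsPole g P) : fiber u v P ∣ compDenom g u v := by
  induction P with
  | infty => simpa [compDenom] using (dvd_pow_self v (Nat.sub_ne_zero_of_lt hP)).mul_left _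
  | coe w => exact (Multiset.dvd_prod (Multiset.mem_map_of_mem _
      ((mem_roots g.denom_ne_zero).mpr hP))).mul_right _

lemma isCoprime_fiber_compNum (huv : IsCoprime u v) (hP : IsPole g P) :
    IsCoprime (fiber u v P) (compNum g u v) := by
  have hnum : g.num ≠ 0 := by
    intro h0
    rw [RatFunc.num_eq_zero_iff] at h0
    subst h0
    induction P <;> simp [RatFunc.denom_zero] at hP
  have hzeros (z : ℂ) (hz : z ∈ g.num.roots) : (z : OnePoint ℂ) ≠ P := by
    rintro rfl
    exact not_isUnit_X_sub_C z ((RatFunc.isCoprime_num_denom g).isUnit_of_dvd'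
      (dvd_iff_isRoot.mpr (isRoot_of_mem_roots hz)) (dvd_iff_isRoot.mpr hP))
  have hprod : IsCoprime (fiber u v P) (g.num.roots.map fun z : ℂ => fiber u v z).prod := by
    refine Multiset.prod_induction _ _ (fun _ _ => IsCoprime.mul_right) isCoprime_one_right ?_
    simp only [Multiset.mem_map]
    rintro _ ⟨z, hz, rfl⟩
    exact isCoprime_fiber huv (hzeros z hz).symm
  have hpow : IsCoprime (fiber u v P) (v ^ (g.denom.natDegree - g.num.natDegree)) := by
    induction P with
    | infty => simp [Nat.sub_eq_zero_of_le hP.le, isCoprime_one_right]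
    | coe w => simpa using (isCoprime_fiber huv (OnePoint.coe_ne_infty w)).pow_right
  have hunit : IsUnit (C g.num.leadingCoeff) := isUnit_C.mpr (leadingCoeff_ne_zero.mpr hnum).isUnit
  exact (isCoprime_mul_unit_left_right hunit _ _).mpr (hprod.mul_right hpow)

lemma compDenom_ne_zero (hnc : ¬∃ k, alg u / alg v = RatFunc.C k) (hv : v ≠ 0) :
    compDenom g u v ≠ 0 := by
  refine mul_ne_zero (Multiset.prod_ne_zero ?_) (pow_ne_zero _ hv)
  simp only [Multiset.mem_map, not_exists, not_and]
  exact fun w _ => fiber_ne_zero hnc hv w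

end Poles

lemma exists_rcomp_mobius_eq_div_mem (M : Submonoid ℂ[X]) {g : RatFunc ℂ} {a b c d : ℂ}
    (hdet : a * d - b * c ≠ 0)
    (h : ∀ P, IsPole g P → fiber (C a * X + C b) (C c * X + C d) P ∈ M) :
    ∃ N, ∃ D ∈ M, rcomp g (mobius a b c d) = alg N / alg D :=
  ⟨_, _, compDenom_mem M h, rcomp_div_eq g (linear_ne_zero_of_det_ne_zero hdet)⟩

section Decomposition

variable {g h : RatFunc ℂ}

lemma rcomp_eq_compNum_div :
    rcomp g h = alg (compNum g h.num h.denom) / alg (compDenom g h.num h.denom) := by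
  conv_lhs => rw [← RatFunc.num_div_denom h]
  exact rcomp_div_eq g h.denom_ne_zero

lemma fiber_mem_monomials_of_isLaurent (hf : IsLaurent (rcomp g h)) (hh : ¬∃ c, h = RatFunc.C c)
    {P : OnePoint ℂ} (hP : IsPole g P) : fiber h.num h.denom P ∈ monomials ℂ := by
  rw [rcomp_eq_compNum_div] at hf
  exact mem_monomials_of_isLaurent_div hf
    (compDenom_ne_zero (by rwa [RatFunc.num_div_denom]) h.denom_ne_zero)
    (fiber_dvd_compDenom hP) (isCoprime_fiber_compNum (RatFunc.isCoprime_num_denom h) hP)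

lemma X_dvd_fiber_iff (hh : ¬∃ c, h = RatFunc.C c) {P P' : OnePoint ℂ} (hne : P ≠ P')
    (hP : fiber h.num h.denom P ∈ monomials ℂ) (hP' : fiber h.num h.denom P' ∈ monomials ℂ) :
    X ∣ fiber h.num h.denom P ↔ ¬X ∣ fiber h.num h.denom P' := by
  refine ⟨fun hX hX' => not_isUnit_X
    ((isCoprime_fiber (RatFunc.isCoprime_num_denom h) hne).isUnit_of_dvd' hX hX'), fun hX' => ?_⟩
  by_contra hX
  obtain ⟨c, hc⟩ := exists_eq_C_of_not_X_dvd hP hX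
  obtain ⟨c', hc'⟩ := exists_eq_C_of_not_X_dvd hP' hX'
  exact hh (by simpa [RatFunc.num_div_denom] using exists_eq_C_of_fiber_eq_C hne hc hc')

lemma exists_mobius_of_unique_pole (hh : ¬∃ c, h = RatFunc.C c) {P : OnePoint ℂ}
    (hP : fiber h.num h.denom P ∈ monomials ℂ) (hpoles : ∀ P', IsPole g P' → P' = P) :
    ∃ μ ν, IsMobius μ ∧ rcomp μ ν = RatFunc.X ∧ rcomp ν μ = RatFunc.X ∧
      (∃ p, rcomp g μ = alg p) ∧ IsLaurent (rcomp ν h) := by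
  -- `ν = (γ X + δ) / (y X - x)` sends `P = [x : y]` to `∞`; `ν ∘ h` has denominator `fiber P`.
  obtain ⟨γ, δ, hdet⟩ : ∃ γ δ : ℂ, γ * -(homCoords P).1 - δ * (homCoords P).2 ≠ 0 := by
    induction P with
    | infty => exact ⟨1, 0, by simp⟩
    | coe w => exact ⟨0, -1, by simp⟩
  obtain ⟨hμ, hμν, hνμ⟩ := mobius_inverse hdet
  refine ⟨_, _, hμ, hμν, hνμ, ?_, ?_⟩
  · have hconst (P' : OnePoint ℂ) (hP' : IsPole g P') :
        fiber (C (-(homCoords P).1) * X + C (-δ)) (C (-(homCoords P).2) * X + C γ) P' ∈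
          MonoidHom.mrange C := by
      rw [hpoles P' hP', fiber_linear, show (homCoords P).2 * -(homCoords P).1 -
        (homCoords P).1 * -(homCoords P).2 = 0 by ring, C_0, zero_mul, zero_add]
      exact ⟨_, rfl⟩
    obtain ⟨N, D, hD, hG⟩ := exists_rcomp_mobius_eq_div_mem _ (det_inv_ne_zero hdet) hconst
    rw [hG]
    exact exists_algebraMap_eq_div_of_mem_mrange_C N hD
  · rw [← RatFunc.num_div_denom h,
      rcomp_mobius h.denom_ne_zero (by rwa [RatFunc.num_div_denom])]
    refine isLaurent_div_of_mem_monomials _ ?_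
    convert hP using 1
    simp only [fiber, C_neg]
    ring

lemma exists_mobius_of_fiber_eq (hh : ¬∃ c, h = RatFunc.C c) {P₁ P₂ : OnePoint ℂ}
    (hne : P₁ ≠ P₂) {c₁ c₂ : ℂ} {n : ℕ} (h₁ : fiber h.num h.denom P₁ = C c₁ * X ^ n)
    (h₂ : fiber h.num h.denom P₂ = C c₂) (hpoles : ∀ P, IsPole g P → P = P₁ ∨ P = P₂) :
    ∃ μ ν, IsMobius μ ∧ rcomp μ ν = RatFunc.X ∧ rcomp ν μ = RatFunc.X ∧
      IsLaurent (rcomp g μ) ∧ rcomp ν h = RatFunc.X ^ n := by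
  have hnc : ¬∃ k, alg h.num / alg h.denom = RatFunc.C k := by rwa [RatFunc.num_div_denom]
  have hc₁ : c₁ ≠ 0 := by
    rintro rfl
    exact fiber_ne_zero hnc h.denom_ne_zero P₁ (by simp [h₁])
  have hc₂ : c₂ ≠ 0 := by
    rintro rfl
    exact fiber_ne_zero hnc h.denom_ne_zero P₂ (by simp [h₂])
  obtain ⟨⟨x₁, y₁⟩, hP₁⟩ : ∃ z, homCoords P₁ = z := ⟨_, rfl⟩
  obtain ⟨⟨x₂, y₂⟩, hP₂⟩ : ∃ z, homCoords P₂ = z := ⟨_, rfl⟩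
  rw [fiber, hP₁] at h₁
  rw [fiber, hP₂] at h₂
  -- `ν = (c₂ · fiber P₁) / (c₁ · fiber P₂)`, written as a Möbius transformation applied to `h`.
  have hdet : c₂ * y₁ * -(c₁ * x₂) - -(c₂ * x₁) * (c₁ * y₂) ≠ 0 := by
    have hne' := homCoords_det_ne_zero hne
    rw [hP₁, hP₂] at hne'
    rw [show c₂ * y₁ * -(c₁ * x₂) - -(c₂ * x₁) * (c₁ * y₂) = c₁ * c₂ * (x₁ * y₂ - x₂ * y₁) by
      ring]
    exact mul_ne_zero (mul_ne_zero hc₁ hc₂) hne'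
  obtain ⟨hμ, hμν, hνμ⟩ := mobius_inverse hdet
  refine ⟨_, _, hμ, hμν, hνμ, ?_, ?_⟩
  · have hmono (P : OnePoint ℂ) (hP : IsPole g P) :
        fiber (C (-(c₁ * x₂)) * X + C (- -(c₂ * x₁))) (C (-(c₁ * y₂)) * X + C (c₂ * y₁)) P ∈
          monomials ℂ := by
      rw [fiber_linear]
      apply linear_mem_monomials
      rcases hpoles P hP with rfl | rfl
      · right; rw [hP₁]; ring
      · left; rw [hP₂]; ring
    obtain ⟨N, D, hD, hG⟩ := exists_rcomp_mobius_eq_div_mem _ (det_inv_ne_zero hdet) hmono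
    rw [hG]
    exact isLaurent_div_of_mem_monomials N hD
  · have hnum : C (c₂ * y₁) * h.num + C (-(c₂ * x₁)) * h.denom = C (c₂ * c₁) * X ^ n := by
      simp only [C_mul, C_neg]
      linear_combination C c₂ * h₁
    have hden : C (c₁ * y₂) * h.num + C (-(c₁ * x₂)) * h.denom = C (c₂ * c₁) := by
      simp only [C_mul, C_neg]
      linear_combination C c₁ * h₂
    have hc : alg (C (c₂ * c₁)) ≠ 0 := RatFunc.algebraMap_ne_zero (C_ne_zero.mpr (by simp [*]))
    rw [← RatFunc.num_div_denom h, rcomp_mobius h.denom_ne_zero hnc, hnum, hden, map_mul,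
      mul_div_cancel_left₀ _ hc, map_pow, RatFunc.algebraMap_X]

lemma exists_mobius_of_ne_poles (hh : ¬∃ c, h = RatFunc.C c)
    (hfib : ∀ P, IsPole g P → fiber h.num h.denom P ∈ monomials ℂ) {P₁ P₂ : OnePoint ℂ}
    (hP₁ : IsPole g P₁) (hP₂ : IsPole g P₂) (hne : P₁ ≠ P₂) :
    ∃ μ ν, IsMobius μ ∧ rcomp μ ν = RatFunc.X ∧ rcomp ν μ = RatFunc.X ∧
      IsLaurent (rcomp g μ) ∧ ∃ n, 0 < n ∧ rcomp ν h = RatFunc.X ^ n := by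
  have hX₁₂ := X_dvd_fiber_iff hh hne (hfib _ hP₁) (hfib _ hP₂)
  have hpoles (P : OnePoint ℂ) (hP : IsPole g P) : P = P₁ ∨ P = P₂ := by
    -- `X ∣ fiber` alternates between distinct poles, which three poles cannot do.
    by_contra! hP'
    have := X_dvd_fiber_iff hh hP'.1 (hfib _ hP) (hfib _ hP₁)
    have := X_dvd_fiber_iff hh hP'.2 (hfib _ hP) (hfib _ hP₂)
    tauto
  wlog hX : X ∣ fiber h.num h.denom P₁ generalizing P₁ P₂
  · exact this hP₂ hP₁ hne.symm (X_dvd_fiber_iff hh hne.symm (hfib _ hP₂) (hfib _ hP₁))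
      (fun P hP => (hpoles P hP).symm) (by tauto)
  have hnc : ¬∃ k, alg h.num / alg h.denom = RatFunc.C k := by rwa [RatFunc.num_div_denom]
  obtain ⟨c₁, n, hn, h₁⟩ :=
    exists_eq_C_mul_X_pow_of_X_dvd (hfib _ hP₁) hX (fiber_ne_zero hnc h.denom_ne_zero P₁)
  obtain ⟨c₂, h₂⟩ := exists_eq_C_of_not_X_dvd (hfib _ hP₂) (hX₁₂.mp hX)
  obtain ⟨μ, ν, hμ, hμν, hνμ, hG, hH⟩ := exists_mobius_of_fiber_eq hh hne h₁ h₂ hpoles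
  exact ⟨μ, ν, hμ, hμν, hνμ, hG, n, hn, hH⟩

end Decomposition

end LaurentDecomposition

open LaurentDecomposition in
theorem laurent_decomposition_types (f g h : RatFunc ℂ)
    (hf : IsLaurent f) (hfc : ¬ ∃ c : ℂ, f = RatFunc.C c)
    (hgh : f = rcomp g h) :
    ∃ μ ν : RatFunc ℂ, IsMobius μ ∧ rcomp μ ν = RatFunc.X ∧ rcomp ν μ = RatFunc.X ∧
      (((∃ p : Polynomial ℂ, rcomp g μ = algebraMap (Polynomial ℂ) (RatFunc ℂ) p) ∧
          IsLaurent (rcomp ν h)) ∨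
       (IsLaurent (rcomp g μ) ∧ ∃ n : ℕ, 0 < n ∧ rcomp ν h = RatFunc.X ^ n)) := by
  subst hgh
  have hh : ¬∃ c, h = RatFunc.C c := by
    rintro ⟨c, rfl⟩
    exact hfc (rcomp_C_right g c)
  have hg : ¬∃ c, g = RatFunc.C c := by
    rintro ⟨c, rfl⟩
    exact hfc ⟨c, rcomp_C_left c h⟩
  have hfib (P : OnePoint ℂ) (hP : IsPole g P) := fiber_mem_monomials_of_isLaurent hf hh hP
  obtain ⟨P₁, hP₁⟩ := exists_isPole hg
  by_cases hunique : ∀ P, IsPole g P → P = P₁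
  · obtain ⟨μ, ν, hμ, hμν, hνμ, hG, hH⟩ :=
      exists_mobius_of_unique_pole hh (hfib P₁ hP₁) hunique
    exact ⟨μ, ν, hμ, hμν, hνμ, Or.inl ⟨hG, hH⟩⟩
  · obtain ⟨P₂, hP₂, hne⟩ : ∃ P₂, IsPole g P₂ ∧ P₂ ≠ P₁ := by simpa using hunique
    obtain ⟨μ, ν, hμ, hμν, hνμ, hG, hH⟩ :=
      exists_mobius_of_ne_poles hh hfib hP₁ hP₂ hne.symm
    exact ⟨μ, ν, hμ, hμν, hνμ, Or.inr ⟨hG, hH⟩⟩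
end

section
/- Suppose g₁ ∘ x^n = g₂ ∘ x^m where g₁, g₂ are complex Laurent polynomials and n, m are positive integers. Then there exists a Laurent polynomial G such that g₁ = G ∘ x^{lcm(n,m)/n} and g₂ = G ∘ x^{lcm(n,m)/m}. -/
/-!
Both sides of `g₁(x^n) = g₂(x^m)` are Laurent polynomials, and after clearing a common power of
`x` the identity becomes `expand n q₁ = expand m q₂` for polynomials `q₁, q₂`. The coefficients of
this polynomial vanish outside multiples of `n` and of `m`, hence outside multiples of
`L = lcm(n, m)`, so it is `expand L r`; cancelling `expand n` resp. `expand m` gives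
`q₁ = expand (L/n) r` and `q₂ = expand (L/m) r`, and `G = r / x^N` works.
-/

open Polynomial

namespace Polynomial

variable {R : Type*} [CommSemiring R]

theorem dvd_of_coeff_expand_ne_zero {n i : ℕ} (hn : 0 < n) {p : R[X]}
    (h : (expand R n p).coeff i ≠ 0) : n ∣ i := by
  by_contra hi
  exact h (by rw [coeff_expand hn, if_neg hi])

theorem expand_contract_of_dvd_of_coeff_ne_zero {L : ℕ} (hL : L ≠ 0) {f : R[X]}
    (hf : ∀ i, f.coeff i ≠ 0 → L ∣ i) : expand R L (contract L f) = f := by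
  ext i
  rw [coeff_expand (Nat.pos_of_ne_zero hL)]
  split_ifs with hi
  · rw [coeff_contract hL, Nat.div_mul_cancel hi]
  · by_contra h
    exact hi (hf i (Ne.symm h))

theorem exists_eq_expand_of_expand_eq {n m : ℕ} (hn : 0 < n) (hm : 0 < m) {p q : R[X]}
    (h : expand R n p = expand R m q) :
    ∃ r, p = expand R (Nat.lcm n m / n) r ∧ q = expand R (Nat.lcm n m / m) r := by
  set r := contract (Nat.lcm n m) (expand R n p)
  have hr : expand R (Nat.lcm n m) r = expand R n p :=
    expand_contract_of_dvd_of_coeff_ne_zero (Nat.lcm_ne_zero hn.ne' hm.ne') fun i hi =>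
      Nat.lcm_dvd (dvd_of_coeff_expand_ne_zero hn hi) (dvd_of_coeff_expand_ne_zero hm (h ▸ hi))
  refine ⟨r, expand_injective hn ?_, expand_injective hm ?_⟩
  · rw [expand_expand, Nat.mul_div_cancel' (Nat.dvd_lcm_left n m), hr]
  · rw [expand_expand, Nat.mul_div_cancel' (Nat.dvd_lcm_right n m), hr, h]

end Polynomial

namespace RatFunc

variable {K : Type*} [Field K] {n : ℕ}

theorem nonZeroDivisors_le_comap_expand (hn : 0 < n) :
    nonZeroDivisors K[X] ≤ (nonZeroDivisors K[X]).comap (Polynomial.expand K n) :=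
  nonZeroDivisors_le_comap_nonZeroDivisors_of_injective _ (expand_injective hn)

noncomputable def expand (n : ℕ) (hn : 0 < n) : RatFunc K →+* RatFunc K :=
  mapRingHom (Polynomial.expand K n) (nonZeroDivisors_le_comap_expand hn)

theorem expand_apply (hn : 0 < n) (f : RatFunc K) :
    expand n hn f = algebraMap _ _ (Polynomial.expand K n f.num) /
      algebraMap _ _ (Polynomial.expand K n f.denom) :=
  map_apply _ (nonZeroDivisors_le_comap_expand hn) f

theorem expand_div_X_pow (hn : 0 < n) (p : K[X]) (k : ℕ) :
    expand n hn (algebraMap K[X] (RatFunc K) p / X ^ k) =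
      algebraMap K[X] (RatFunc K) (Polynomial.expand K n p) / X ^ (n * k) := by
  rw [← algebraMap_X (K := K), ← map_pow, expand, coe_mapRingHom_eq_coe_map,
    map_apply_div _ (nonZeroDivisors_le_comap_expand hn), map_pow,
    expand_X, ← pow_mul, map_pow, algebraMap_X]

theorem algebraMap_expand (p : K[X]) :
    algebraMap K[X] (RatFunc K) (Polynomial.expand K n p) =
      p.eval₂ (algebraMap K (RatFunc K)) (X ^ n) := by
  rw [← aeval_def, ← algebraMap_X, ← map_pow, aeval_algebraMap_apply]
  rfl

end RatFunc

theorem rcomp_X_pow {n : ℕ} (hn : 0 < n) (f : RatFunc ℂ) :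
    rcomp f (RatFunc.X ^ n) = RatFunc.expand n hn f := by
  rw [RatFunc.expand_apply, RatFunc.algebraMap_expand, RatFunc.algebraMap_expand]
  rfl

theorem IsLaurent.exists_eq_div_X_pow_of_le {f : RatFunc ℂ} (hf : IsLaurent f) :
    ∃ k, ∀ l, k ≤ l → ∃ p : ℂ[X], f = algebraMap _ _ p / RatFunc.X ^ l := by
  obtain ⟨p, k, rfl⟩ := hf
  refine ⟨k, fun l hl => ?_⟩
  obtain ⟨j, rfl⟩ := Nat.exists_eq_add_of_le hl
  refine ⟨p * X ^ j, ?_⟩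
  rw [map_mul, map_pow, RatFunc.algebraMap_X, pow_add,
    mul_div_mul_right _ _ (pow_ne_zero _ RatFunc.X_ne_zero)]

theorem two_type2_decompositions (g₁ g₂ : RatFunc ℂ) (n m : ℕ)
    (hn : 0 < n) (hm : 0 < m) (hg₁ : IsLaurent g₁) (hg₂ : IsLaurent g₂)
    (heq : rcomp g₁ (RatFunc.X ^ n) = rcomp g₂ (RatFunc.X ^ m)) :
    ∃ G : RatFunc ℂ, IsLaurent G ∧
      g₁ = rcomp G (RatFunc.X ^ (Nat.lcm n m / n)) ∧
      g₂ = rcomp G (RatFunc.X ^ (Nat.lcm n m / m)) := by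
  have hn' : 0 < Nat.lcm n m / n :=
    Nat.div_pos (Nat.le_of_dvd (Nat.lcm_pos hn hm) (Nat.dvd_lcm_left n m)) hn
  have hm' : 0 < Nat.lcm n m / m :=
    Nat.div_pos (Nat.le_of_dvd (Nat.lcm_pos hn hm) (Nat.dvd_lcm_right n m)) hm
  obtain ⟨k₁, hk₁⟩ := hg₁.exists_eq_div_X_pow_of_le
  obtain ⟨k₂, hk₂⟩ := hg₂.exists_eq_div_X_pow_of_le
  set N := k₁ + k₂
  -- write `g₁, g₂` over denominators that both become `X ^ (lcm n m * N)` after substitution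
  obtain ⟨q₁, rfl⟩ :=
    hk₁ (Nat.lcm n m / n * N) ((Nat.le_add_right _ _).trans (Nat.le_mul_of_pos_left _ hn'))
  obtain ⟨q₂, rfl⟩ :=
    hk₂ (Nat.lcm n m / m * N) ((Nat.le_add_left _ _).trans (Nat.le_mul_of_pos_left _ hm'))
  rw [rcomp_X_pow hn, rcomp_X_pow hm, RatFunc.expand_div_X_pow, RatFunc.expand_div_X_pow,
    ← mul_assoc, ← mul_assoc, Nat.mul_div_cancel' (Nat.dvd_lcm_left n m),
    Nat.mul_div_cancel' (Nat.dvd_lcm_right n m),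
    div_left_inj' (pow_ne_zero _ RatFunc.X_ne_zero)] at heq
  obtain ⟨r, rfl, rfl⟩ := exists_eq_expand_of_expand_eq hn hm (RatFunc.algebraMap_injective ℂ heq)
  refine ⟨algebraMap _ _ r / RatFunc.X ^ N, ⟨r, N, rfl⟩, ?_, ?_⟩
  · rw [rcomp_X_pow hn', RatFunc.expand_div_X_pow]
  · rw [rcomp_X_pow hm', RatFunc.expand_div_X_pow]
end

section
/- If g ∘ h = x^n with g, h ∈ ℂ[x] and n a positive integer, then there is a linear polynomial μ ∈ ℂ[x] and a divisor d of n such that g ∘ μ = x^d and μ^{−1} ∘ h = x^{n/d}. -/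
/-!
Differentiating `g ∘ h = X ^ n` gives `h' * (g' ∘ h) = n X ^ (n - 1)`, so `h'` divides a power of
the prime `X` and is a monomial `c X ^ k`. Integrating, `h = a X ^ e + b = μ ∘ X ^ e` with
`μ = a X + b` linear, and then `(g ∘ μ) ∘ X ^ e = X ^ n` forces `g ∘ μ = X ^ (n / e)` because
composition on the right with `X ^ e` is injective.
-/

open Polynomial

namespace Polynomial

theorem eq_C_mul_X_pow_of_dvd_X_pow {K : Type*} [Field K] {p : K[X]} {m : ℕ}
    (hp : p ∣ X ^ m) : ∃ c ≠ 0, ∃ k, p = C c * X ^ k := by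
  obtain ⟨k, -, ⟨u, hu⟩⟩ := (dvd_prime_pow prime_X m).1 hp
  obtain ⟨c, hc, hcu⟩ := Polynomial.isUnit_iff.1 (u⁻¹).isUnit
  refine ⟨c, hc.ne_zero, k, ?_⟩
  rw [hcu, ← hu, mul_comm _ (p * u), Units.mul_inv_cancel_right]

theorem eq_C_mul_X_pow_add_C_of_derivative_eq {K : Type*} [Field K] [CharZero K] {p : K[X]}
    {c : K} {k : ℕ} (hp : derivative p = C c * X ^ k) :
    p = C (c / (k + 1)) * X ^ (k + 1) + C (p.coeff 0) := by
  set q := p - C (c / (k + 1)) * X ^ (k + 1)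
  have hq : derivative q = 0 := by
    have hk : (k + 1 : K) ≠ 0 := Nat.cast_add_one_ne_zero k
    simp only [q, derivative_sub, derivative_C_mul_X_pow, hp, Nat.cast_add, Nat.cast_one,
      add_tsub_cancel_right, div_mul_cancel₀ c hk, sub_self]
  have hq0 : q.coeff 0 = p.coeff 0 := by simp [q, coeff_X_pow]
  rw [← hq0, ← eq_C_of_derivative_eq_zero hq, add_sub_cancel]

theorem derivative_dvd_X_pow_of_comp_eq_X_pow {K : Type*} [Field K] [CharZero K] {g h : K[X]}
    {n : ℕ} (hn : n ≠ 0) (hgh : g.comp h = X ^ n) : derivative h ∣ X ^ (n - 1) := by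
  have hchain : C (n : K) * X ^ (n - 1) = derivative h * (derivative g).comp h := by
    rw [← derivative_X_pow, ← hgh, derivative_comp]
  have hunit : IsUnit (C (n : K)) := isUnit_C.2 (isUnit_iff_ne_zero.2 (Nat.cast_ne_zero.2 hn))
  exact hunit.dvd_mul_left.1 ⟨_, hchain⟩

theorem exists_eq_C_mul_X_pow_add_C_of_comp_eq_X_pow {K : Type*} [Field K] [CharZero K]
    {g h : K[X]} {n : ℕ} (hn : n ≠ 0) (hgh : g.comp h = X ^ n) :
    ∃ a ≠ 0, ∃ b e, 0 < e ∧ h = C a * X ^ e + C b := by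
  obtain ⟨c, hc, k, hk⟩ :=
    eq_C_mul_X_pow_of_dvd_X_pow (derivative_dvd_X_pow_of_comp_eq_X_pow hn hgh)
  refine ⟨c / (k + 1), div_ne_zero hc (Nat.cast_add_one_ne_zero k), h.coeff 0, k + 1,
    k.succ_pos, ?_⟩
  exact_mod_cast eq_C_mul_X_pow_add_C_of_derivative_eq hk

section Linear

variable {K : Type*} [Field K] {a : K} (b : K)

theorem C_mul_X_add_C_comp_C_inv_mul_X_sub_C (ha : a ≠ 0) :
    (C a * X + C b).comp (C a⁻¹ * (X - C b)) = X := by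
  rw [add_comp, mul_comp, C_comp, X_comp, C_comp, ← mul_assoc, ← C_mul, mul_inv_cancel₀ ha, C_1,
    one_mul, sub_add_cancel]

theorem C_inv_mul_X_sub_C_comp_C_mul_X_add_C (ha : a ≠ 0) :
    (C a⁻¹ * (X - C b)).comp (C a * X + C b) = X := by
  rw [mul_comp, C_comp, sub_comp, X_comp, C_comp, add_sub_cancel_right, ← mul_assoc, ← C_mul,
    inv_mul_cancel₀ ha, C_1, one_mul]

end Linear

theorem eq_X_pow_of_comp_X_pow_eq {R : Type*} [CommSemiring R] {p : R[X]} {d e : ℕ} (he : 0 < e)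
    (hp : p.comp (X ^ e) = X ^ (d * e)) : p = X ^ d :=
  expand_injective he <| by rw [expand_eq_comp_X_pow, hp, map_pow, expand_X, ← pow_mul, mul_comm]

end Polynomial

theorem decompositions_of_pow (n : ℕ) (hn : 0 < n) (g h : Polynomial ℂ)
    (hgh : g.comp h = Polynomial.X ^ n) :
    ∃ d : ℕ, d ∣ n ∧ ∃ μ ν : Polynomial ℂ, μ.degree = 1 ∧
      μ.comp ν = Polynomial.X ∧ ν.comp μ = Polynomial.X ∧
      g.comp μ = Polynomial.X ^ d ∧ ν.comp h = Polynomial.X ^ (n / d) := by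
  obtain ⟨a, ha, b, e, he, rfl⟩ := exists_eq_C_mul_X_pow_add_C_of_comp_eq_X_pow hn.ne' hgh
  have hμ : C a * X ^ e + C b = (C a * X + C b).comp (X ^ e) := by simp
  have hdeg : g.natDegree * e = n := by
    rw [← natDegree_X_pow (R := ℂ) n, ← hgh, natDegree_comp, natDegree_add_C,
      natDegree_C_mul_X_pow e a ha]
  have hd : 0 < g.natDegree := Nat.pos_of_mul_pos_right (hdeg ▸ hn)
  refine ⟨g.natDegree, ⟨e, hdeg.symm⟩, C a * X + C b, C a⁻¹ * (X - C b), degree_linear ha,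
    C_mul_X_add_C_comp_C_inv_mul_X_sub_C b ha, C_inv_mul_X_sub_C_comp_C_mul_X_add_C b ha, ?_, ?_⟩
  · exact eq_X_pow_of_comp_X_pow_eq he (by rw [comp_assoc, ← hμ, hgh, hdeg])
  · rw [← hdeg, Nat.mul_div_cancel_left _ hd, hμ, ← comp_assoc,
      C_inv_mul_X_sub_C_comp_C_mul_X_add_C b ha, X_comp]
end

section
/- If g ∘ h = D_n with g, h ∈ ℂ[x] and n a positive integer, then there is a linear polynomial μ ∈ ℂ[x] and a divisor d of n such that g ∘ μ = D_d and μ^{−1} ∘ h = D_{n/d}. -/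
/-! With `d = deg g` and `m = deg h` we have `g ∘ h = D_n = D_d ∘ D_m`, and `D_m` is monic. So it
suffices that in characteristic zero two decompositions `g₁ ∘ h₁ = g₂ ∘ h₂` with monic inner
factors of the same degree `m` have `h₂ - h₁` constant. Cancelling the leading terms of the outer
factors, `h₁ ^ d - h₂ ^ d` has degree at most `(d - 1) m`; but it equals
`(h₁ - h₂) ∑ h₁ ^ i h₂ ^ (d - 1 - i)`, and the sum has degree exactly `(d - 1) m`, its leading
coefficient being `d ≠ 0`. -/

open Polynomial

namespace Polynomial

section Dickson

variable {R : Type*} [CommRing R] [Nontrivial R]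

theorem dickson_one_one_succ_monic_and_natDegree :
    ∀ n : ℕ, (dickson 1 (1 : R) (n + 1)).Monic ∧ (dickson 1 (1 : R) (n + 1)).natDegree = n + 1
  | 0 => by simp [dickson_one]
  | n + 1 => by
    obtain ⟨hmon, hdeg⟩ := dickson_one_one_succ_monic_and_natDegree n
    have hprev : (dickson 1 (1 : R) n).natDegree ≤ n := by
      cases n with
      | zero => simp only [dickson_zero]; norm_num
      | succ k => exact (dickson_one_one_succ_monic_and_natDegree k).2.le
    have hX : (X * dickson 1 (1 : R) (n + 1)).natDegree = n + 2 := by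
      rw [monic_X.natDegree_mul hmon, natDegree_X, hdeg]; ring
    have hlt :
        (C 1 * dickson 1 (1 : R) n).natDegree < (X * dickson 1 (1 : R) (n + 1)).natDegree := by
      rw [C_1, one_mul, hX]; omega
    rw [dickson_add_two]
    exact ⟨(monic_X.mul hmon).sub_of_left (degree_lt_degree hlt),
      by rw [natDegree_sub_eq_left_of_natDegree_lt hlt, hX]⟩

theorem monic_dickson_one_one {n : ℕ} (hn : 0 < n) : (dickson 1 (1 : R) n).Monic := by
  obtain ⟨k, rfl⟩ := Nat.exists_eq_add_of_lt hn
  simpa using (dickson_one_one_succ_monic_and_natDegree k).1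

theorem natDegree_dickson_one_one {n : ℕ} (hn : 0 < n) :
    (dickson 1 (1 : R) n).natDegree = n := by
  obtain ⟨k, rfl⟩ := Nat.exists_eq_add_of_lt hn
  simpa using (dickson_one_one_succ_monic_and_natDegree k).2

end Dickson

section Decomposition

variable {R : Type*} [CommRing R] [IsDomain R]

theorem comp_left_injective {q : R[X]} (hq : 0 < q.natDegree) :
    Function.Injective fun p : R[X] => p.comp q := by
  intro p₁ p₂ h
  have hsub : (p₁ - p₂).comp q = 0 := by rw [sub_comp]; exact sub_eq_zero.2 h
  rcases comp_eq_zero_iff.1 hsub with h0 | ⟨-, hC⟩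
  · exact sub_eq_zero.1 h0
  · rw [hC, natDegree_C] at hq
    exact absurd hq (lt_irrefl 0)

theorem natDegree_geom_sum₂_of_monic {p q : R[X]} (hp : p.Monic) (hq : q.Monic)
    (hpq : p.natDegree = q.natDegree) {d : ℕ} (hd : (d : R) ≠ 0) :
    (∑ i ∈ Finset.range d, p ^ i * q ^ (d - 1 - i)).natDegree = (d - 1) * p.natDegree ∧
      (∑ i ∈ Finset.range d, p ^ i * q ^ (d - 1 - i)).leadingCoeff = d := by
  have hterm : ∀ i ∈ Finset.range d, (p ^ i * q ^ (d - 1 - i)).Monic ∧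
      (p ^ i * q ^ (d - 1 - i)).natDegree = (d - 1) * p.natDegree := by
    intro i hi
    refine ⟨(hp.pow i).mul (hq.pow _), ?_⟩
    rw [(hp.pow i).natDegree_mul (hq.pow _), natDegree_pow, natDegree_pow, ← hpq, ← add_mul,
      Nat.add_sub_cancel' (Nat.le_sub_one_of_lt (Finset.mem_range.1 hi))]
  have hcoeff : (∑ i ∈ Finset.range d, p ^ i * q ^ (d - 1 - i)).coeff ((d - 1) * p.natDegree)
      = d := by
    rw [finsetSum_coeff, Finset.sum_congr rfl fun i hi =>
      (hterm i hi).2 ▸ (hterm i hi).1.coeff_natDegree]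
    simp
  have hdeg := natDegree_eq_of_le_of_coeff_ne_zero
    (natDegree_sum_le_of_forall_le _ _ fun i hi => (hterm i hi).2.le) (hcoeff ▸ hd)
  exact ⟨hdeg, by rw [leadingCoeff, hdeg, hcoeff]⟩

theorem natDegree_pow_sub_pow_of_monic {p q : R[X]} (hp : p.Monic) (hq : q.Monic)
    (hpq : p.natDegree = q.natDegree) (hne : p ≠ q) {d : ℕ} (hd : (d : R) ≠ 0) :
    (p ^ d - q ^ d).natDegree = (d - 1) * p.natDegree + (p - q).natDegree := by
  obtain ⟨hS, hlc⟩ := natDegree_geom_sum₂_of_monic hp hq hpq hd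
  rw [← geom_sum₂_mul, natDegree_mul (leadingCoeff_ne_zero.1 (hlc ▸ hd)) (sub_ne_zero.2 hne), hS]

theorem natDegree_pow_sub_pow_le_of_comp_eq_comp {g₁ g₂ h₁ h₂ : R[X]} (hh₁ : h₁.Monic)
    (hh₂ : h₂.Monic) (hm : 0 < h₁.natDegree) (hdeg : h₂.natDegree = h₁.natDegree)
    (heq : g₁.comp h₁ = g₂.comp h₂) :
    (h₁ ^ g₁.natDegree - h₂ ^ g₁.natDegree).natDegree ≤ (g₁.natDegree - 1) * h₁.natDegree := by
  rcases eq_or_ne g₁ 0 with rfl | hg₁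
  · simp
  have hd : g₂.natDegree = g₁.natDegree := by
    have := congrArg natDegree heq
    rw [natDegree_comp, natDegree_comp, hdeg] at this
    exact (Nat.eq_of_mul_eq_mul_right hm this).symm
  have hlc : g₂.leadingCoeff = g₁.leadingCoeff := by
    have := congrArg leadingCoeff heq
    rwa [leadingCoeff_comp hm.ne', leadingCoeff_comp (hdeg ▸ hm.ne'), hh₁.leadingCoeff,
      hh₂.leadingCoeff, one_pow, one_pow, mul_one, mul_one, eq_comm] at this
  have hsplit : ∀ g h : R[X], g.comp h = g.eraseLead.comp h + C g.leadingCoeff * h ^ g.natDegree :=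
    fun g h => by
      conv_lhs => rw [← g.eraseLead_add_C_mul_X_pow]
      rw [add_comp, mul_comp, C_comp, X_pow_comp]
  have hkey : C g₁.leadingCoeff * (h₁ ^ g₁.natDegree - h₂ ^ g₁.natDegree) =
      g₂.eraseLead.comp h₂ - g₁.eraseLead.comp h₁ := by
    have := heq
    rw [hsplit g₁, hsplit g₂, hd, hlc] at this
    linear_combination this
  have hbound : ∀ g h : R[X], (g.eraseLead.comp h).natDegree ≤ (g.natDegree - 1) * h.natDegree :=
    fun g h => natDegree_comp.trans_le (Nat.mul_le_mul_right _ g.eraseLead_natDegree_le)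
  rw [← natDegree_C_mul (leadingCoeff_ne_zero.2 hg₁), hkey]
  refine (natDegree_sub_le _ _).trans (max_le ?_ (hbound g₁ h₁))
  simpa [hd, hdeg] using hbound g₂ h₂

theorem Monic.exists_eq_add_C_of_comp_eq_comp {g₁ g₂ h₁ h₂ : R[X]} (hh₁ : h₁.Monic)
    (hh₂ : h₂.Monic) (hm : 0 < h₁.natDegree) (hdeg : h₂.natDegree = h₁.natDegree)
    (hg : (g₁.natDegree : R) ≠ 0) (heq : g₁.comp h₁ = g₂.comp h₂) :
    ∃ b, h₂ = h₁ + C b := by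
  rcases eq_or_ne h₁ h₂ with rfl | hne
  · exact ⟨0, by simp⟩
  have hle := natDegree_pow_sub_pow_le_of_comp_eq_comp hh₁ hh₂ hm hdeg heq
  rw [natDegree_pow_sub_pow_of_monic hh₁ hh₂ hdeg.symm hne hg] at hle
  have hc := eq_C_of_natDegree_eq_zero (show (h₁ - h₂).natDegree = 0 by omega)
  exact ⟨-(h₁ - h₂).coeff 0, by rw [map_neg, ← hc]; ring⟩

end Decomposition

section Linear

variable {K : Type*} [Field K]

theorem exists_eq_C_mul_add_C_of_comp_eq_comp {g₁ g₂ h₁ h₂ : K[X]} (hh₁ : h₁.Monic)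
    (hm : 0 < h₁.natDegree) (hdeg : h₂.natDegree = h₁.natDegree)
    (hg : (g₁.natDegree : K) ≠ 0) (heq : g₁.comp h₁ = g₂.comp h₂) :
    ∃ a b, a ≠ 0 ∧ h₂ = C a * h₁ + C b := by
  set a := h₂.leadingCoeff
  have ha : a ≠ 0 := leadingCoeff_ne_zero.2 (ne_zero_of_natDegree_gt (hdeg ▸ hm))
  have hmonic : (C a⁻¹ * h₂).Monic := monic_C_mul_of_mul_leadingCoeff_eq_one (inv_mul_cancel₀ ha)
  have hcomp : (g₂.comp (C a * X)).comp (C a⁻¹ * h₂) = g₂.comp h₂ := by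
    rw [comp_assoc, mul_comp, C_comp, X_comp, ← mul_assoc, ← C_mul, mul_inv_cancel₀ ha, C_1,
      one_mul]
  obtain ⟨b, hb⟩ := hh₁.exists_eq_add_C_of_comp_eq_comp hmonic hm
    (by rw [natDegree_C_mul (inv_ne_zero ha), hdeg]) hg (heq.trans hcomp.symm)
  refine ⟨a, a * b, ha, ?_⟩
  rw [C_mul, ← mul_add, ← hb, ← mul_assoc, ← C_mul, mul_inv_cancel₀ ha, C_1, one_mul]

theorem C_mul_X_add_C_comp_inv {a : K} (ha : a ≠ 0) (b : K) :
    (C a * X + C b).comp (C a⁻¹ * (X - C b)) = X := by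
  simp only [add_comp, mul_comp, C_comp, X_comp, ← mul_assoc, ← C_mul, mul_inv_cancel₀ ha, C_1,
    one_mul, sub_add_cancel]

theorem inv_comp_C_mul_X_add_C {a : K} (ha : a ≠ 0) (b : K) :
    (C a⁻¹ * (X - C b)).comp (C a * X + C b) = X := by
  simp only [mul_comp, sub_comp, C_comp, X_comp, add_sub_cancel_right, ← mul_assoc, ← C_mul,
    inv_mul_cancel₀ ha, C_1, one_mul]

end Linear

end Polynomial

theorem decompositions_of_dickson (n : ℕ) (hn : 0 < n) (g h : Polynomial ℂ)
    (hgh : g.comp h = Polynomial.dickson 1 (1 : ℂ) n) :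
    ∃ d : ℕ, d ∣ n ∧ ∃ μ ν : Polynomial ℂ, μ.degree = 1 ∧
      μ.comp ν = Polynomial.X ∧ ν.comp μ = Polynomial.X ∧
      g.comp μ = Polynomial.dickson 1 (1 : ℂ) d ∧
      ν.comp h = Polynomial.dickson 1 (1 : ℂ) (n / d) := by
  set d := g.natDegree
  set m := h.natDegree
  have hdm : d * m = n := by rw [← natDegree_comp, hgh, natDegree_dickson_one_one hn]
  have hd : 0 < d := Nat.pos_of_mul_pos_right (hdm ▸ hn)
  have hm : 0 < m := Nat.pos_of_mul_pos_left (hdm ▸ hn)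
  have hDm : (dickson 1 (1 : ℂ) m).natDegree = m := natDegree_dickson_one_one hm
  obtain ⟨a, b, ha, hab⟩ := exists_eq_C_mul_add_C_of_comp_eq_comp (monic_dickson_one_one hm)
    (by rwa [hDm]) hDm.symm (by rw [natDegree_dickson_one_one hd]; exact_mod_cast hd.ne')
    (by rw [← dickson_one_one_mul, hdm, hgh])
  have hμ : (C a * X + C b).comp (dickson 1 1 m) = h := by
    rw [add_comp, mul_comp, C_comp, X_comp, C_comp, hab]
  refine ⟨d, Dvd.intro _ hdm, C a * X + C b, C a⁻¹ * (X - C b), degree_linear ha,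
    C_mul_X_add_C_comp_inv ha b, inv_comp_C_mul_X_add_C ha b, ?_, ?_⟩
  · apply comp_left_injective (by rwa [hDm])
    simp only [comp_assoc, hμ, hgh, ← dickson_one_one_mul, hdm]
  · rw [← hdm, Nat.mul_div_cancel_left _ hd, ← hμ, ← comp_assoc, inv_comp_C_mul_X_add_C ha b,
      X_comp]
end

section
/- For every odd positive integer n, D_n(x) + D_n(y) is divisible by x + y in ℂ[x, y]; moreover D_n(x) + D_n(y) = (x + y)·Φ_n(x, y), where Φ_n(x,y) is the product over odd k with 1 ≤ k < n of (x² − 2xy·cos(πk/n) + y² − 4 sin²(πk/n)). -/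
/-! Write `a = z + z⁻¹` and `b = w + w⁻¹`. Then `Dₙ(a) + Dₙ(b) = z⁻ⁿ (zⁿ + wⁿ) (zⁿ + w⁻ⁿ)`, and
both brackets split over the roots `u = ζ^(2j+1)` of `Xⁿ = -1`, where `ζ = exp(πi/n)`; pairing the
linear factors gives `∏ᵤ (a - u w - u⁻¹ w⁻¹)`. For odd `n` the root `u = -1` contributes `a + b`,
and the other roots come in pairs `u, u⁻¹` whose factors multiply to
`a² - (u + u⁻¹) a b + b² - (2 - u² - u⁻²)`, which is the quadratic factor of `Φₙ` since
`u + u⁻¹ = 2 cos(πk/n)` and `2 - u² - u⁻² = 4 sin²(πk/n)`. The identity in `ℂ[x, y]` follows from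
the pointwise one. -/

open Polynomial Finset

theorem IsPrimitiveRoot.prod_range_sub_odd_pow_mul {R : Type*} [CommRing R] [IsDomain R]
    {n : ℕ} {ζ : R} (hζ : IsPrimitiveRoot ζ (2 * n)) (hn : 0 < n) (z c : R) :
    ∏ j ∈ range n, (z - ζ ^ (2 * j + 1) * c) = z ^ n + c ^ n := by
  have hζn : ζ ^ n = -1 := (hζ.pow (by omega) (mul_comm 2 n)).eq_neg_one_of_two_right
  have hroots := X_pow_sub_C_eq_prod (hζ.pow (by omega) rfl) hn (α := ζ * c) (a := -c ^ n)
    (by rw [mul_pow, hζn, neg_one_mul])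
  have h := congrArg (eval z) hroots
  simp only [eval_sub, eval_pow, eval_X, eval_C, eval_prod, sub_neg_eq_add] at h
  rw [h]
  exact prod_congr rfl fun j _ => by ring

theorem Finset.prod_range_two_mul_add_one {M : Type*} [CommMonoid M] (f : ℕ → M) (m : ℕ) :
    ∏ j ∈ range (2 * m + 1), f j = f m * ∏ i ∈ range m, f i * f (2 * m - i) := by
  rw [show 2 * m + 1 = m + (m + 1) by ring, prod_range_add, prod_range_succ', prod_mul_distrib,
    ← prod_range_reflect (fun x => f (m + (x + 1)))]
  have hreflect (i : ℕ) (hi : i ∈ range m) : f (m + (m - 1 - i + 1)) = f (2 * m - i) := by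
    rw [mem_range] at hi
    congr 1
    omega
  rw [prod_congr rfl hreflect]
  ac_rfl

theorem Finset.prod_filter_odd_Ico_one {M : Type*} [CommMonoid M] (f : ℕ → M) (m : ℕ) :
    ∏ k ∈ (Ico 1 (2 * m + 1)).filter Odd, f k = ∏ i ∈ range m, f (2 * i + 1) := by
  symm
  refine prod_nbij' (fun i => 2 * i + 1) (fun k => k / 2) ?_ ?_ ?_ ?_ fun _ _ => rfl <;>
    simp [Nat.odd_iff] <;> omega

theorem IsAlgClosed.exists_add_inv_eq {K : Type*} [Field K] [IsAlgClosed K] (a : K) :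
    ∃ z ≠ 0, z + z⁻¹ = a := by
  obtain ⟨z, hz⟩ := IsAlgClosed.exists_root (C 1 * X ^ 2 + C (-a) * X + C 1)
    (by rw [degree_quadratic one_ne_zero]; decide)
  simp only [IsRoot, eval_add, eval_mul, eval_C, eval_pow, eval_X] at hz
  have hz0 : z ≠ 0 := by rintro rfl; simp at hz
  refine ⟨z, hz0, ?_⟩
  field_simp
  linear_combination hz

section

variable {K : Type*} [Field K]

theorem add_inv_sub_add_eq_inv_mul_sub_mul_sub {z w u : K} (hz : z ≠ 0) (hw : w ≠ 0)
    (hu : u ≠ 0) :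
    z + z⁻¹ - (u * w + u⁻¹ * w⁻¹) = z⁻¹ * ((z - u * w) * (z - u⁻¹ * w⁻¹)) := by
  field_simp
  ring

theorem sub_add_mul_sub_add_eq {a w u : K} (hw : w ≠ 0) (hu : u ≠ 0) :
    (a - (u * w + u⁻¹ * w⁻¹)) * (a - (u⁻¹ * w + u * w⁻¹)) =
      a ^ 2 - (u + u⁻¹) * a * (w + w⁻¹) + (w + w⁻¹) ^ 2 - (2 - u ^ 2 - u⁻¹ ^ 2) := by
  field_simp
  ring

namespace Polynomial

theorem dickson_one_one_eval_add_inv_add_eq_prod {n : ℕ} {ζ : K}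
    (hζ : IsPrimitiveRoot ζ (2 * n)) (hn : 0 < n) {z w : K} (hz : z ≠ 0) (hw : w ≠ 0) :
    (dickson 1 (1 : K) n).eval (z + z⁻¹) + (dickson 1 (1 : K) n).eval (w + w⁻¹) =
      ∏ j ∈ range n, (z + z⁻¹ - (ζ ^ (2 * j + 1) * w + (ζ ^ (2 * j + 1))⁻¹ * w⁻¹)) := by
  have hζ0 : ζ ≠ 0 := hζ.ne_zero (by omega)
  calc (dickson 1 (1 : K) n).eval (z + z⁻¹) + (dickson 1 (1 : K) n).eval (w + w⁻¹)
      = z ^ n + z⁻¹ ^ n + (w ^ n + w⁻¹ ^ n) := by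
        rw [dickson_one_one_eval_add_inv _ _ (mul_inv_cancel₀ hz),
          dickson_one_one_eval_add_inv _ _ (mul_inv_cancel₀ hw)]
    _ = z⁻¹ ^ n * ((z ^ n + w ^ n) * (z ^ n + w⁻¹ ^ n)) := by
        have hzn : z ^ n * z⁻¹ ^ n = 1 := by rw [← mul_pow, mul_inv_cancel₀ hz, one_pow]
        have hwn : w ^ n * w⁻¹ ^ n = 1 := by rw [← mul_pow, mul_inv_cancel₀ hw, one_pow]
        linear_combination (-(z ^ n) - w⁻¹ ^ n - w ^ n) * hzn - z⁻¹ ^ n * hwn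
    _ = z⁻¹ ^ n * ((∏ j ∈ range n, (z - ζ ^ (2 * j + 1) * w)) *
          ∏ j ∈ range n, (z - ζ⁻¹ ^ (2 * j + 1) * w⁻¹)) := by
        rw [hζ.prod_range_sub_odd_pow_mul hn, hζ.inv.prod_range_sub_odd_pow_mul hn]
    _ = _ := by
        rw [← prod_mul_distrib, ← card_range n, ← prod_const, card_range, ← prod_mul_distrib]
        refine prod_congr rfl fun j _ => ?_
        rw [add_inv_sub_add_eq_inv_mul_sub_mul_sub hz hw (pow_ne_zero _ hζ0), inv_pow]

theorem dickson_one_one_eval_add_inv_add_eq_mul_prod {m : ℕ} {ζ : K}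
    (hζ : IsPrimitiveRoot ζ (2 * (2 * m + 1))) {z w : K} (hz : z ≠ 0) (hw : w ≠ 0) :
    (dickson 1 (1 : K) (2 * m + 1)).eval (z + z⁻¹) +
        (dickson 1 (1 : K) (2 * m + 1)).eval (w + w⁻¹) =
      (z + z⁻¹ + (w + w⁻¹)) * ∏ i ∈ range m,
        ((z + z⁻¹) ^ 2 - (ζ ^ (2 * i + 1) + (ζ ^ (2 * i + 1))⁻¹) * (z + z⁻¹) * (w + w⁻¹) +
          (w + w⁻¹) ^ 2 - (2 - (ζ ^ (2 * i + 1)) ^ 2 - (ζ ^ (2 * i + 1))⁻¹ ^ 2)) := by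
  have hζ0 : ζ ≠ 0 := hζ.ne_zero (by omega)
  have hmid : ζ ^ (2 * m + 1) = -1 := (hζ.pow (by omega) (mul_comm _ _)).eq_neg_one_of_two_right
  have hrefl (i : ℕ) (hi : i < m) : ζ ^ (2 * (2 * m - i) + 1) = (ζ ^ (2 * i + 1))⁻¹ := by
    refine eq_inv_of_mul_eq_one_left ?_
    rw [← pow_add, show 2 * (2 * m - i) + 1 + (2 * i + 1) = 2 * (2 * m + 1) by omega, hζ.pow_eq_one]
  rw [dickson_one_one_eval_add_inv_add_eq_prod hζ (by omega) hz hw,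
    prod_range_two_mul_add_one, hmid]
  congr 1
  · rw [inv_neg, inv_one]
    ring
  · refine prod_congr rfl fun i hi => ?_
    rw [hrefl i (mem_range.1 hi), inv_inv]
    exact sub_add_mul_sub_add_eq hw (pow_ne_zero _ hζ0)

end Polynomial

end

theorem MvPolynomial.eval_aeval_X {R σ : Type*} [CommSemiring R] (v : σ → R) (i : σ) (p : R[X]) :
    eval v (Polynomial.aeval (X i) p) = p.eval (v i) := by
  change aeval v (Polynomial.aeval (X i) p) = _
  rw [← Polynomial.aeval_algHom_apply, aeval_X, Polynomial.coe_aeval_eq_eval]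

namespace Complex

theorem isPrimitiveRoot_exp_pi_mul_I_div {n : ℕ} (hn : n ≠ 0) :
    IsPrimitiveRoot (exp (Real.pi * I / n)) (2 * n) := by
  convert isPrimitiveRoot_exp (2 * n) (by positivity) using 2
  push_cast
  field_simp

theorem two_cos_eq_exp_add_inv (θ : ℂ) : 2 * cos θ = exp (θ * I) + (exp (θ * I))⁻¹ := by
  rw [two_cos, ← exp_neg, neg_mul]

theorem four_sin_sq_eq (θ : ℂ) : 4 * sin θ ^ 2 = 2 - exp (θ * I) ^ 2 - (exp (θ * I))⁻¹ ^ 2 := by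
  have hinv : exp (θ * I) * (exp (θ * I))⁻¹ = 1 := mul_inv_cancel₀ (exp_ne_zero _)
  have h2sin : 2 * sin θ = ((exp (θ * I))⁻¹ - exp (θ * I)) * I := by
    rw [two_sin, ← exp_neg, neg_mul]
  linear_combination (2 * sin θ + ((exp (θ * I))⁻¹ - exp (θ * I)) * I) * h2sin +
    ((exp (θ * I))⁻¹ - exp (θ * I)) ^ 2 * I_sq + 2 * hinv

theorem dickson_one_one_eval_add_eq_mul_prod {n : ℕ} (hodd : Odd n) (a b : ℂ) :
    (dickson 1 (1 : ℂ) n).eval a + (dickson 1 (1 : ℂ) n).eval b =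
      (a + b) * ∏ k ∈ (Ico 1 n).filter Odd,
        (a ^ 2 - 2 * cos (Real.pi * k / n) * a * b + b ^ 2 - 4 * sin (Real.pi * k / n) ^ 2) := by
  obtain ⟨m, rfl⟩ := hodd
  obtain ⟨z, hz, rfl⟩ := IsAlgClosed.exists_add_inv_eq a
  obtain ⟨w, hw, rfl⟩ := IsAlgClosed.exists_add_inv_eq b
  rw [dickson_one_one_eval_add_inv_add_eq_mul_prod (isPrimitiveRoot_exp_pi_mul_I_div (by omega))
    hz hw, prod_filter_odd_Ico_one]
  refine congrArg _ (prod_congr rfl fun i _ => ?_)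
  have hpow : exp (Real.pi * I / ↑(2 * m + 1)) ^ (2 * i + 1) =
      exp (Real.pi * ↑(2 * i + 1) / ↑(2 * m + 1) * I) := by
    rw [← exp_nat_mul]
    ring_nf
  rw [hpow, two_cos_eq_exp_add_inv, four_sin_sq_eq]

end Complex

theorem dickson_add_dickson_factorization_general (n : ℕ) (hodd : Odd n) :
    let x : MvPolynomial (Fin 2) ℂ := MvPolynomial.X 0
    let y : MvPolynomial (Fin 2) ℂ := MvPolynomial.X 1
    let D : MvPolynomial (Fin 2) ℂ :=
      Polynomial.aeval x (Polynomial.dickson 1 (1 : ℂ) n) +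
        Polynomial.aeval y (Polynomial.dickson 1 (1 : ℂ) n)
    let Φ : MvPolynomial (Fin 2) ℂ :=
      ∏ k ∈ (Finset.Ico 1 n).filter (fun k => Odd k),
        (x ^ 2 - MvPolynomial.C (2 * Complex.cos ((Real.pi : ℂ) * k / n)) * x * y + y ^ 2
          - MvPolynomial.C (4 * Complex.sin ((Real.pi : ℂ) * k / n) ^ 2))
    (x + y) ∣ D ∧ D = (x + y) * Φ := by
  intro x y D Φ
  have hD : D = (x + y) * Φ := MvPolynomial.funext fun v => by
    simp only [D, Φ, x, y, map_add, map_mul, map_sub, map_pow, map_prod, MvPolynomial.eval_X,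
      MvPolynomial.eval_C, MvPolynomial.eval_aeval_X]
    exact Complex.dickson_one_one_eval_add_eq_mul_prod hodd (v 0) (v 1)
  exact ⟨Dvd.intro Φ hD.symm, hD⟩

theorem dickson_add_dickson_factorization (n : ℕ) (hn : 0 < n) (hodd : Odd n) :
    let x : MvPolynomial (Fin 2) ℂ := MvPolynomial.X 0
    let y : MvPolynomial (Fin 2) ℂ := MvPolynomial.X 1
    let D : MvPolynomial (Fin 2) ℂ :=
      Polynomial.aeval x (Polynomial.dickson 1 (1 : ℂ) n) +
        Polynomial.aeval y (Polynomial.dickson 1 (1 : ℂ) n)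
    let Φ : MvPolynomial (Fin 2) ℂ :=
      ∏ k ∈ (Finset.Ico 1 n).filter (fun k => Odd k),
        (x ^ 2 - MvPolynomial.C (2 * Complex.cos ((Real.pi : ℂ) * k / n)) * x * y + y ^ 2
          - MvPolynomial.C (4 * Complex.sin ((Real.pi : ℂ) * k / n) ^ 2))
    (x + y) ∣ D ∧ D = (x + y) * Φ :=
  dickson_add_dickson_factorization_general n hodd
end

section
/- Suppose g, h, p ∈ ℂ[x] are nonzero and g ∘ h = (x² − 4)·p(x)². Then after replacing g and h by g ∘ μ and μ^{−1} ∘ h for some linear μ ∈ ℂ[x], there exist B, D ∈ ℂ[x] and a positive integer n such that either (1) g = x·B² and h = (x² − 4)·D², or (2) g = (x² − 4)·B² and h = D_n. -/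
/-!
Root multiplicities are multiplicative under composition:
`mult_a (g ∘ h) = mult_{h a} g * mult_a (h - h a)`. Since `(x² - 4) p²` has odd multiplicity
exactly at `±2`, for every root `b` of `g` of odd multiplicity the roots of `h - b` of odd
multiplicity are the points `α ∈ {2, -2}` with `h α = b`. At most one such `b` can make `h - b` a
square, because two squares differing by a nonzero constant are constant. Hence either `g` has a
single root `b` of odd multiplicity and `h - b = (x² - 4) D²`, or exactly two, `b₁ ≠ b₂`, and
`(h - b₁)(h - b₂) = (x² - 4) S²`.

In the second case `A = 2h - b₁ - b₂` solves the polynomial Pell equation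
`A² - (x² - 4)(2S)² = (b₁ - b₂)²`. Substituting `x = z + z⁻¹` turns `x² - 4` into `(z - z⁻¹)²`,
so `A ± (z - z⁻¹)·2S` are Laurent polynomials in `z` with constant product, hence monomials
`(u/2) z^{±n}`; this says `A = (u/2) D_n` with `u² = (b₁ - b₂)²`.
-/

open Polynomial

theorem exists_pow_add_pow_eq_pow_mul {K : Type*} [Field K] {k j m : ℕ} (hkj : k + j = 2 * m) :
    ∃ n : ℕ, ∀ z : K, z ≠ 0 → z ^ k + z ^ j = z ^ m * (z ^ n + z⁻¹ ^ n) := by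
  wlog hle : k ≤ j generalizing k j
  · obtain ⟨n, hn⟩ := this (by omega : j + k = 2 * m) (by omega)
    exact ⟨n, fun z hz => by rw [add_comm, hn z hz]⟩
  refine ⟨j - m, fun z hz => ?_⟩
  have hj : z ^ j = z ^ m * z ^ (j - m) := by rw [← pow_add]; congr 1; omega
  have hk : z ^ k * z ^ (j - m) = z ^ m := by rw [← pow_add]; congr 1; omega
  rw [hj, inv_pow, ← hk]
  field_simp
  ring

theorem two_ne_neg_two {K : Type*} [Field K] [NeZero (2 : K)] : (2 : K) ≠ -2 := by
  intro h
  have h4 : (2 : K) * 2 = 0 := by linear_combination h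
  exact NeZero.ne (2 : K) (mul_self_eq_zero.mp h4)

namespace Polynomial

section RootMultiplicity

variable {R : Type*} [CommRing R]

theorem sub_C_ne_zero_of_natDegree_pos {h : R[X]} (hh : 0 < h.natDegree) (b : R) :
    h - C b ≠ 0 :=
  ne_zero_of_natDegree_gt (n := 0) (by rwa [natDegree_sub_C])

theorem ne_zero_and_natDegree_pos_of_odd_rootMultiplicity_comp {g h : R[X]} {a : R}
    (hodd : Odd (rootMultiplicity a (g.comp h))) : g ≠ 0 ∧ 0 < h.natDegree := by
  refine ⟨?_, Nat.pos_of_ne_zero fun h0 => ?_⟩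
  · rintro rfl
    simp at hodd
  · rw [eq_C_of_natDegree_eq_zero h0, comp_C, rootMultiplicity_C] at hodd
    exact Nat.not_odd_zero hodd

variable [IsDomain R]

theorem rootMultiplicity_pow (p : R[X]) (n : ℕ) (a : R) :
    rootMultiplicity a (p ^ n) = n * rootMultiplicity a p := by
  classical
  simp [← count_roots, roots_pow]

theorem rootMultiplicity_comp {g h : R[X]} (hg : g ≠ 0) (hh : 0 < h.natDegree) (a : R) :
    rootMultiplicity a (g.comp h) =
      rootMultiplicity (h.eval a) g * rootMultiplicity a (h - C (h.eval a)) := by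
  obtain ⟨q, hgq, hq⟩ := exists_eq_pow_rootMultiplicity_mul_and_not_dvd g hg (h.eval a)
  have hcomp : g.comp h = (h - C (h.eval a)) ^ rootMultiplicity (h.eval a) g * q.comp h := by
    conv_lhs => rw [hgq]
    simp [mul_comp]
  have hne : g.comp h ≠ 0 := by
    rw [Ne, comp_eq_zero_iff]
    rintro (h0 | ⟨-, h0⟩)
    · exact hg h0
    · rw [h0, natDegree_C] at hh
      exact hh.false
  have hqa : ¬ (q.comp h).IsRoot a := by
    rwa [IsRoot, eval_comp, ← IsRoot, ← dvd_iff_isRoot]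
  rw [hcomp, rootMultiplicity_mul (hcomp ▸ hne), rootMultiplicity_pow,
    rootMultiplicity_eq_zero hqa, add_zero]

theorem odd_rootMultiplicity_eval_of_odd_comp {g h : R[X]} {a : R}
    (hodd : Odd (rootMultiplicity a (g.comp h))) : Odd (rootMultiplicity (h.eval a) g) := by
  obtain ⟨hg, hh⟩ := ne_zero_and_natDegree_pos_of_odd_rootMultiplicity_comp hodd
  rw [rootMultiplicity_comp hg hh] at hodd
  exact (Nat.odd_mul.mp hodd).1

theorem odd_rootMultiplicity_sub_C_iff {g h : R[X]} (hg : g ≠ 0) (hh : 0 < h.natDegree) {b : R}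
    (hb : Odd (rootMultiplicity b g)) (a : R) :
    Odd (rootMultiplicity a (h - C b)) ↔ Odd (rootMultiplicity a (g.comp h)) ∧ h.eval a = b := by
  by_cases hab : h.eval a = b
  · subst hab
    simp [rootMultiplicity_comp hg hh, Nat.odd_mul, hb]
  · rw [rootMultiplicity_eq_zero (by simpa [sub_eq_zero] using hab)]
    simp [hab]

theorem odd_rootMultiplicity_mul_sq_iff {F p : R[X]} (hF : F ≠ 0) (hp : p ≠ 0) (a : R) :
    Odd (rootMultiplicity a (F * p ^ 2)) ↔ Odd (rootMultiplicity a F) := by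
  rw [rootMultiplicity_mul (mul_ne_zero hF (pow_ne_zero 2 hp)), rootMultiplicity_pow]
  simp [Nat.odd_add, parity_simps]

end RootMultiplicity

section Squares

variable {K : Type*} [Field K]

theorem exists_eq_prod_X_sub_C_mul_sq [IsAlgClosed K] {F : K[X]} (hF : F ≠ 0) {S : Finset K}
    (hS : ∀ a, a ∈ S ↔ Odd (rootMultiplicity a F)) :
    ∃ E : K[X], F = (∏ a ∈ S, (X - C a)) * E ^ 2 := by
  classical
  obtain ⟨s, hs⟩ := IsAlgClosed.exists_pow_nat_eq F.leadingCoeff two_pos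
  set T := F.roots.toFinset
  have hST : S ⊆ T := fun a ha => by
    rw [Multiset.mem_toFinset, mem_roots hF, ← rootMultiplicity_pos hF]
    exact ((hS a).mp ha).pos
  have hodd : ∀ a ∈ T,
      (X - C a) ^ (rootMultiplicity a F % 2) = if a ∈ S then X - C a else 1 := by
    intro a _
    by_cases ha : a ∈ S
    · rw [if_pos ha, Nat.odd_iff.mp ((hS a).mp ha), pow_one]
    · rw [if_neg ha, Nat.even_iff.mp (Nat.not_odd_iff_even.mp (by rwa [← hS])), pow_zero]
  refine ⟨C s * ∏ a ∈ T, (X - C a) ^ (rootMultiplicity a F / 2), ?_⟩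
  conv_lhs => rw [← C_leadingCoeff_mul_prod_multiset_X_sub_C (p := F)
    IsAlgClosed.card_roots_eq_natDegree, Finset.prod_multiset_map_count]
  simp_rw [count_roots]
  calc C F.leadingCoeff * ∏ a ∈ T, (X - C a) ^ rootMultiplicity a F
      = C F.leadingCoeff * ∏ a ∈ T, ((X - C a) ^ (rootMultiplicity a F % 2) *
          ((X - C a) ^ (rootMultiplicity a F / 2)) ^ 2) := by
        congr 1
        refine Finset.prod_congr rfl fun a _ => ?_
        rw [← pow_mul, ← pow_add, Nat.mod_add_div']
    _ = _ := by
        rw [Finset.prod_mul_distrib, Finset.prod_congr rfl hodd, Finset.prod_ite_mem,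
          Finset.inter_eq_right.mpr hST, Finset.prod_pow, ← hs, C_pow]
        ring

theorem natDegree_eq_zero_of_sq_sub_sq_eq_C [NeZero (2 : K)] {E F : K[X]} {d : K} (hd : d ≠ 0)
    (hEF : E ^ 2 - F ^ 2 = C d) : E.natDegree = 0 := by
  have hprod : (E - F) * (E + F) = C d := by rw [← hEF]; ring
  have hne : (E - F) * (E + F) ≠ 0 := by rw [hprod]; exact C_ne_zero.mpr hd
  have hdeg := natDegree_mul (left_ne_zero_of_mul hne) (right_ne_zero_of_mul hne)
  rw [hprod, natDegree_C] at hdeg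
  have h2E : C 2 * E = (E - F) + (E + F) := by rw [C_ofNat]; ring
  have := natDegree_add_le (E - F) (E + F)
  rw [← h2E, natDegree_C_mul (NeZero.ne 2)] at this
  omega

theorem eq_of_sub_C_eq_sq [NeZero (2 : K)] {h : K[X]} (hh : 0 < h.natDegree) {b b' : K}
    {E E' : K[X]} (hE : h - C b = E ^ 2) (hE' : h - C b' = E' ^ 2) : b = b' := by
  by_contra hne
  have hdiff : E' ^ 2 - E ^ 2 = C (b - b') := by rw [← hE, ← hE', C_sub]; ring
  have hdeg := congrArg natDegree hE'
  rw [natDegree_sub_C, natDegree_pow,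
    natDegree_eq_zero_of_sq_sub_sq_eq_C (sub_ne_zero.mpr hne) hdiff] at hdeg
  omega

end Squares

section Pell

variable {K : Type*} [Field K]

theorem X_sq_sub_four_ne_zero : (X ^ 2 - 4 : K[X]) ≠ 0 := by
  rw [← map_ofNat C 4]
  exact X_pow_sub_C_ne_zero two_pos 4

theorem eval_add_inv_dickson {z : K} (hz : z ≠ 0) (n : ℕ) :
    (dickson 1 (1 : K) n).eval (z + z⁻¹) = z ^ n + z⁻¹ ^ n :=
  dickson_one_one_eval_add_inv z z⁻¹ (mul_inv_cancel₀ hz) n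

theorem exists_add_inv_eq [IsAlgClosed K] (w : K) : ∃ z : K, z ≠ 0 ∧ z + z⁻¹ = w := by
  obtain ⟨z, hz⟩ := IsAlgClosed.exists_root (X ^ 2 - C w * X + 1) (by
    rw [show (X ^ 2 - C w * X + 1 : K[X]).degree = 2 by compute_degree!]
    decide)
  simp only [IsRoot, eval_add, eval_sub, eval_mul, eval_pow, eval_C, eval_X, eval_one] at hz
  have hz0 : z ≠ 0 := by rintro rfl; simp at hz
  refine ⟨z, hz0, ?_⟩
  field_simp
  linear_combination hz

theorem exists_eval_eq_pow_mul_eval_add_inv (A : K[X]) {N : ℕ} (hN : A.natDegree ≤ N) :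
    ∃ P : K[X], ∀ z : K, z ≠ 0 → P.eval z = z ^ N * A.eval (z + z⁻¹) := by
  refine ⟨∑ i ∈ Finset.range (N + 1), C (A.coeff i) * X ^ (N - i) * (X ^ 2 + 1) ^ i,
    fun z hz => ?_⟩
  rw [eval_eq_sum_range' (Nat.lt_succ_of_le hN), Finset.mul_sum, eval_finsetSum]
  refine Finset.sum_congr rfl fun i hi => ?_
  rw [← pow_sub_mul_pow z (Nat.lt_succ_iff.mp (Finset.mem_range.mp hi))]
  have hz2 : z ^ 2 + 1 = z * (z + z⁻¹) := by field_simp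
  simp only [eval_mul, eval_pow, eval_C, eval_X, eval_add, eval_one, hz2, mul_pow]
  ring

theorem eq_of_eval_eq_of_ne_zero [Infinite K] {p q : K[X]}
    (h : ∀ z : K, z ≠ 0 → p.eval z = q.eval z) : p = q :=
  eq_of_infinite_eval_eq p q ((Set.finite_singleton 0).infinite_compl.mono h)

theorem exists_eq_C_mul_X_pow_of_mul_eq {P Q : K[X]} {c : K} {n : ℕ} (hc : c ≠ 0)
    (hPQ : P * Q = C c * X ^ n) : ∃ (u : K) (k : ℕ), P = C u * X ^ k := by
  have hdvd : P ∣ X ^ n := ⟨Q * C c⁻¹, by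
    rw [← mul_assoc, hPQ, mul_right_comm, ← C_mul, mul_inv_cancel₀ hc, C_1, one_mul]⟩
  obtain ⟨k, -, v, hv⟩ := (dvd_prime_pow prime_X n).mp hdvd
  obtain ⟨r, -, hr⟩ := Polynomial.isUnit_iff.mp (v⁻¹).isUnit
  exact ⟨r, k, by rw [hr, ← hv, mul_comm P, Units.inv_mul_cancel_left]⟩

theorem exists_eval_add_inv_eq_of_sq_sub_mul_sq_eq_C [Infinite K] {A B : K[X]} {c : K}
    (hc : c ≠ 0) (hAB : A ^ 2 - (X ^ 2 - 4) * B ^ 2 = C c) :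
    ∃ (u : K) (n : ℕ), u ^ 2 = c ∧
      ∀ z : K, z ≠ 0 → 2 * A.eval (z + z⁻¹) = u * (z ^ n + z⁻¹ ^ n) := by
  obtain ⟨N, hAN, hBN⟩ : ∃ N, A.natDegree ≤ N ∧ B.natDegree ≤ N :=
    ⟨_, le_max_left _ _, le_max_right _ _⟩
  obtain ⟨PA, hPA⟩ := exists_eval_eq_pow_mul_eval_add_inv A hAN
  obtain ⟨PB, hPB⟩ := exists_eval_eq_pow_mul_eval_add_inv B hBN
  -- `P z = z ^ (N + 1) * (A w + (z - z⁻¹) * B w)` and `Q` likewise with `-`, where `w = z + z⁻¹`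
  set P := X * PA + (X ^ 2 - 1) * PB
  set Q := X * PA - (X ^ 2 - 1) * PB
  have hPQ : P * Q = C c * X ^ (2 * (N + 1)) := eq_of_eval_eq_of_ne_zero fun z hz => by
    have hw := congrArg (eval (z + z⁻¹)) hAB
    simp only [eval_sub, eval_mul, eval_pow, eval_X, eval_ofNat, eval_C] at hw
    simp only [P, Q, eval_add, eval_sub, eval_mul, eval_pow, eval_X, eval_one, eval_C,
      hPA z hz, hPB z hz]
    generalize A.eval (z + z⁻¹) = a at hw
    generalize B.eval (z + z⁻¹) = b at hw
    linear_combination z ^ (2 * N + 2) * hw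
      + z ^ (2 * N) * b ^ 2 * (2 * z ^ 2 + z * z⁻¹ + 1) * mul_inv_cancel₀ hz
  obtain ⟨u, k, hP⟩ := exists_eq_C_mul_X_pow_of_mul_eq hc hPQ
  obtain ⟨v, j, hQ⟩ := exists_eq_C_mul_X_pow_of_mul_eq hc ((mul_comm Q P).trans hPQ)
  -- at `z = 1` the `B`-terms vanish
  have huv : u = v := by
    have h1 : P.eval 1 = Q.eval 1 := by simp [P, Q]
    rw [hP, hQ] at h1
    simpa using h1
  subst huv
  have hCX : C (u ^ 2) * X ^ (k + j) = C c * X ^ (2 * (N + 1)) := by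
    rw [← hPQ, hP, hQ, C_pow]
    ring
  rw [C_mul_X_pow_eq_monomial, C_mul_X_pow_eq_monomial, monomial_eq_monomial_iff] at hCX
  obtain ⟨hkj, hu⟩ := hCX.resolve_right fun h => hc h.2
  obtain ⟨n, hn⟩ := exists_pow_add_pow_eq_pow_mul (K := K) hkj
  refine ⟨u, n, hu, fun z hz => mul_left_cancel₀ (pow_ne_zero (N + 1) hz) ?_⟩
  have hsum := congrArg (eval z) (congrArg₂ (· + ·) hP hQ)
  simp only [P, Q, eval_add, eval_sub, eval_mul, eval_pow, eval_X, eval_C, eval_one,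
    hPA z hz] at hsum
  linear_combination hsum + u * hn z hz

theorem exists_eq_C_mul_dickson_of_sq_sub_mul_sq_eq_C [IsAlgClosed K] [CharZero K]
    {A B : K[X]} {c : K} (hc : c ≠ 0) (hB : B ≠ 0) (hAB : A ^ 2 - (X ^ 2 - 4) * B ^ 2 = C c) :
    ∃ (u : K) (n : ℕ), 0 < n ∧ u ^ 2 = c ∧ A = C (u / 2) * dickson 1 1 n := by
  obtain ⟨u, n, hu, hn⟩ := exists_eval_add_inv_eq_of_sq_sub_mul_sq_eq_C hc hAB
  have hA : A = C (u / 2) * dickson 1 1 n := by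
    refine Polynomial.funext fun w => ?_
    obtain ⟨z, hz, rfl⟩ := exists_add_inv_eq w
    rw [eval_mul, eval_C, eval_add_inv_dickson hz]
    linear_combination hn z hz / 2
  refine ⟨u, n, Nat.pos_of_ne_zero fun hn0 => hB ?_, hu, hA⟩
  have hA0 : A = C (A.eval 2) := by
    rw [hA, hn0, dickson_zero]
    simpa using Or.inl (map_ofNat C 3).symm
  have h2 : A.eval 2 ^ 2 = c := by
    have := congrArg (eval 2) hAB
    norm_num at this
    exact this
  have h0 : (X ^ 2 - 4) * B ^ 2 = 0 := by
    rw [hA0, ← C_pow, h2] at hAB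
    linear_combination -hAB
  simpa [X_sq_sub_four_ne_zero] using h0

end Pell

section OddRootsAtTwo

variable {K : Type*} [Field K] {g h : K[X]}

theorem X_sq_sub_four_eq : (X ^ 2 - 4 : K[X]) = (X - C 2) * (X - C (-2)) := by
  rw [C_neg, map_ofNat C 2]
  ring

theorem odd_rootMultiplicity_X_sq_sub_four_mul_sq_iff [NeZero (2 : K)] {p : K[X]} (hp : p ≠ 0)
    (a : K) : Odd (rootMultiplicity a ((X ^ 2 - 4) * p ^ 2)) ↔ a = 2 ∨ a = -2 := by
  classical
  rw [odd_rootMultiplicity_mul_sq_iff X_sq_sub_four_ne_zero hp, X_sq_sub_four_eq,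
    rootMultiplicity_mul (mul_ne_zero (X_sub_C_ne_zero _) (X_sub_C_ne_zero _)),
    rootMultiplicity_X_sub_C, rootMultiplicity_X_sub_C]
  rcases eq_or_ne a 2 with rfl | ha
  · simp [two_ne_neg_two]
  rcases eq_or_ne a (-2) with rfl | ha'
  · simp [two_ne_neg_two.symm]
  simp [ha, ha']

variable [IsAlgClosed K]

theorem exists_sub_C_eq_prod_mul_sq
    (hodd : ∀ a, Odd (rootMultiplicity a (g.comp h)) ↔ a = 2 ∨ a = -2)
    {b : K} (hb : Odd (rootMultiplicity b g)) {S : Finset K}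
    (hS : ∀ a, a ∈ S ↔ (a = 2 ∨ a = -2) ∧ h.eval a = b) :
    ∃ E : K[X], h - C b = (∏ a ∈ S, (X - C a)) * E ^ 2 := by
  obtain ⟨hg, hh⟩ :=
    ne_zero_and_natDegree_pos_of_odd_rootMultiplicity_comp ((hodd 2).mpr (Or.inl rfl))
  refine exists_eq_prod_X_sub_C_mul_sq (sub_C_ne_zero_of_natDegree_pos hh b) fun a => ?_
  rw [hS, odd_rootMultiplicity_sub_C_iff hg hh hb, hodd]

theorem exists_sub_C_eq_sq (hodd : ∀ a, Odd (rootMultiplicity a (g.comp h)) ↔ a = 2 ∨ a = -2)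
    {b : K} (hb : Odd (rootMultiplicity b g)) (h2 : h.eval 2 ≠ b) (hm2 : h.eval (-2) ≠ b) :
    ∃ E : K[X], h - C b = E ^ 2 := by
  simpa using exists_sub_C_eq_prod_mul_sq hodd hb (S := ∅) fun a => by
    simp only [Finset.notMem_empty]
    grind

theorem exists_factorization_of_eval_two_ne
    (hodd : ∀ a, Odd (rootMultiplicity a (g.comp h)) ↔ a = 2 ∨ a = -2)
    (hne : h.eval 2 ≠ h.eval (-2)) :
    ∃ (b₁ b₂ : K) (B S : K[X]), b₁ ≠ b₂ ∧ S ≠ 0 ∧ g = (X - C b₁) * (X - C b₂) * B ^ 2 ∧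
      (h - C b₁) * (h - C b₂) = (X ^ 2 - 4) * S ^ 2 := by
  classical
  obtain ⟨hg, hh⟩ :=
    ne_zero_and_natDegree_pos_of_odd_rootMultiplicity_comp ((hodd 2).mpr (Or.inl rfl))
  set β := h.eval 2
  set β' := h.eval (-2)
  have hβ : Odd (rootMultiplicity β g) :=
    odd_rootMultiplicity_eval_of_odd_comp ((hodd 2).mpr (Or.inl rfl))
  have hβ' : Odd (rootMultiplicity β' g) :=
    odd_rootMultiplicity_eval_of_odd_comp ((hodd (-2)).mpr (Or.inr rfl))
  obtain ⟨E, hE⟩ := exists_sub_C_eq_prod_mul_sq hodd hβ (S := {2}) fun a => by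
    simp only [Finset.mem_singleton]
    grind
  obtain ⟨F, hF⟩ := exists_sub_C_eq_prod_mul_sq hodd hβ' (S := {-2}) fun a => by
    simp only [Finset.mem_singleton]
    grind
  rw [Finset.prod_singleton] at hE hF
  have hEF : E * F ≠ 0 := by
    refine mul_ne_zero ?_ ?_ <;> rintro rfl
    · exact sub_C_ne_zero_of_natDegree_pos hh β (by simpa using hE)
    · exact sub_C_ne_zero_of_natDegree_pos hh β' (by simpa using hF)
  have hdeg : h.natDegree = 1 + 2 * E.natDegree := by
    rw [← natDegree_sub_C (a := β), hE, natDegree_mul (X_sub_C_ne_zero 2)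
      (pow_ne_zero 2 (left_ne_zero_of_mul hEF)), natDegree_X_sub_C, natDegree_pow]
  -- `h` has odd degree, so `h - C b` is never a square
  obtain ⟨B, hB⟩ := exists_eq_prod_X_sub_C_mul_sq hg (S := {β, β'}) fun a => by
    simp only [Finset.mem_insert, Finset.mem_singleton]
    refine ⟨by rintro (rfl | rfl) <;> assumption, fun ha => ?_⟩
    by_contra! hab
    obtain ⟨E', hE'⟩ := exists_sub_C_eq_sq hodd ha (Ne.symm hab.1) (Ne.symm hab.2)
    have := congrArg natDegree hE'
    rw [natDegree_sub_C, natDegree_pow] at this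
    omega
  exact ⟨β, β', B, E * F, hne, hEF, by rw [hB, Finset.prod_pair hne],
    by rw [hE, hF, X_sq_sub_four_eq]; ring⟩

variable [NeZero (2 : K)]

theorem exists_factorization_of_eval_two_eq
    (hodd : ∀ a, Odd (rootMultiplicity a (g.comp h)) ↔ a = 2 ∨ a = -2)
    (heq : h.eval 2 = h.eval (-2)) :
    (∃ (b : K) (B D : K[X]), g = (X - C b) * B ^ 2 ∧ h - C b = (X ^ 2 - 4) * D ^ 2) ∨
    (∃ (b₁ b₂ : K) (B S : K[X]), b₁ ≠ b₂ ∧ S ≠ 0 ∧ g = (X - C b₁) * (X - C b₂) * B ^ 2 ∧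
      (h - C b₁) * (h - C b₂) = (X ^ 2 - 4) * S ^ 2) := by
  classical
  obtain ⟨hg, hh⟩ :=
    ne_zero_and_natDegree_pos_of_odd_rootMultiplicity_comp ((hodd 2).mpr (Or.inl rfl))
  set β := h.eval 2
  have hβ : Odd (rootMultiplicity β g) :=
    odd_rootMultiplicity_eval_of_odd_comp ((hodd 2).mpr (Or.inl rfl))
  obtain ⟨D, hD⟩ := exists_sub_C_eq_prod_mul_sq hodd hβ (S := {2, -2}) fun a => by
    simp only [Finset.mem_insert, Finset.mem_singleton]
    grind
  rw [Finset.prod_pair two_ne_neg_two, ← X_sq_sub_four_eq] at hD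
  by_cases hsingle : ∀ b, Odd (rootMultiplicity b g) → b = β
  · left
    obtain ⟨B, hB⟩ := exists_eq_prod_X_sub_C_mul_sq hg (S := {β}) fun a => by
      rw [Finset.mem_singleton]
      exact ⟨by rintro rfl; exact hβ, hsingle a⟩
    exact ⟨β, B, D, by simpa using hB, hD⟩
  right
  obtain ⟨b, hb, hbβ⟩ := not_forall₂.mp hsingle
  obtain ⟨E, hE⟩ := exists_sub_C_eq_sq hodd hb (Ne.symm hbβ) (heq ▸ Ne.symm hbβ)
  obtain ⟨B, hB⟩ := exists_eq_prod_X_sub_C_mul_sq hg (S := {β, b}) fun a => by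
    simp only [Finset.mem_insert, Finset.mem_singleton]
    refine ⟨by rintro (rfl | rfl) <;> assumption, fun ha => or_iff_not_imp_left.mpr fun haβ => ?_⟩
    obtain ⟨E', hE'⟩ := exists_sub_C_eq_sq hodd ha (Ne.symm haβ) (heq ▸ Ne.symm haβ)
    exact eq_of_sub_C_eq_sq hh hE' hE
  have hDE : D * E ≠ 0 := by
    refine mul_ne_zero ?_ ?_ <;> rintro rfl
    · exact sub_C_ne_zero_of_natDegree_pos hh β (by simpa using hD)
    · exact sub_C_ne_zero_of_natDegree_pos hh b (by simpa using hE)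
  exact ⟨β, b, B, D * E, Ne.symm hbβ, hDE, by rw [hB, Finset.prod_pair (Ne.symm hbβ)],
    by rw [hD, hE]; ring⟩

theorem exists_factorization_of_odd_rootMultiplicity_comp_iff
    (hodd : ∀ a, Odd (rootMultiplicity a (g.comp h)) ↔ a = 2 ∨ a = -2) :
    (∃ (b : K) (B D : K[X]), g = (X - C b) * B ^ 2 ∧ h - C b = (X ^ 2 - 4) * D ^ 2) ∨
    (∃ (b₁ b₂ : K) (B S : K[X]), b₁ ≠ b₂ ∧ S ≠ 0 ∧ g = (X - C b₁) * (X - C b₂) * B ^ 2 ∧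
      (h - C b₁) * (h - C b₂) = (X ^ 2 - 4) * S ^ 2) := by
  by_cases heq : h.eval 2 = h.eval (-2)
  exacts [exists_factorization_of_eval_two_eq hodd heq,
    Or.inr (exists_factorization_of_eval_two_ne hodd heq)]

end OddRootsAtTwo

section Normalization

variable {K : Type*} [Field K]

theorem C_mul_X_add_C_comp_inverse (a b : K) (ha : a ≠ 0) :
    (C a * X + C b).comp (C a⁻¹ * (X - C b)) = X ∧
      (C a⁻¹ * (X - C b)).comp (C a * X + C b) = X := by
  simp only [add_comp, mul_comp, sub_comp, C_comp, X_comp]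
  constructor
  · rw [← mul_assoc, ← C_mul, mul_inv_cancel₀ ha, C_1, one_mul, sub_add_cancel]
  · rw [add_sub_cancel_right, ← mul_assoc, ← C_mul, inv_mul_cancel₀ ha, C_1, one_mul]

theorem exists_comp_linear_eq_and_eq_dickson [IsAlgClosed K] [CharZero K] {g h B S : K[X]}
    {b₁ b₂ : K} (hb : b₁ ≠ b₂) (hS : S ≠ 0) (hg : g = (X - C b₁) * (X - C b₂) * B ^ 2)
    (hh : (h - C b₁) * (h - C b₂) = (X ^ 2 - 4) * S ^ 2) :
    ∃ (a c : K) (n : ℕ) (B' : K[X]), a ≠ 0 ∧ 0 < n ∧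
      g.comp (C a * X + C c) = (X ^ 2 - 4) * B' ^ 2 ∧ h = C a * dickson 1 1 n + C c := by
  obtain ⟨u, n, hn, hu, hA⟩ := exists_eq_C_mul_dickson_of_sq_sub_mul_sq_eq_C
    (A := 2 * h - C (b₁ + b₂)) (B := 2 * S) (pow_ne_zero 2 (sub_ne_zero.mpr hb))
    (mul_ne_zero two_ne_zero hS) (by rw [C_add, C_pow, C_sub]; linear_combination 4 * hh)
  have hu0 : u ≠ 0 := by
    rintro rfl
    exact hb (sub_eq_zero.mp (pow_eq_zero_iff two_ne_zero |>.mp (by rw [← hu]; ring)))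
  refine ⟨u / 4, (b₁ + b₂) / 2, n, C (u / 4) * B.comp (C (u / 4) * X + C ((b₁ + b₂) / 2)),
    by simpa using hu0, hn, Polynomial.funext fun w => ?_, Polynomial.funext fun w => ?_⟩
  · simp only [hg, eval_comp, eval_mul, eval_add, eval_sub, eval_pow, eval_C, eval_X, eval_ofNat]
    linear_combination (1 / 4) * (B.eval (u / 4 * w + (b₁ + b₂) / 2)) ^ 2 * hu
  · have hw := congrArg (eval w) hA
    simp only [eval_mul, eval_add, eval_sub, eval_C, eval_ofNat] at hw ⊢
    linear_combination hw / 2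

end Normalization

end Polynomial

theorem decomp_x_sq_sub_four_mul_sq_general (g h p : Polynomial ℂ)
    (hp : p ≠ 0)
    (hgh : g.comp h = (Polynomial.X ^ 2 - 4) * p ^ 2) :
    ∃ μ ν : Polynomial ℂ, μ.degree = 1 ∧
      μ.comp ν = Polynomial.X ∧ ν.comp μ = Polynomial.X ∧
      ∃ (B D : Polynomial ℂ) (n : ℕ), 0 < n ∧
        ((g.comp μ = Polynomial.X * B ^ 2 ∧
            ν.comp h = (Polynomial.X ^ 2 - 4) * D ^ 2) ∨
         (g.comp μ = (Polynomial.X ^ 2 - 4) * B ^ 2 ∧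
            ν.comp h = Polynomial.dickson 1 (1 : ℂ) n)) := by
  have hodd : ∀ a, Odd (rootMultiplicity a (g.comp h)) ↔ a = 2 ∨ a = -2 := by
    rw [hgh]
    exact odd_rootMultiplicity_X_sq_sub_four_mul_sq_iff hp
  rcases exists_factorization_of_odd_rootMultiplicity_comp_iff hodd with
    ⟨b, B, D, hgB, hhD⟩ | ⟨b₁, b₂, B, S, hb, hS, hgB, hhS⟩
  · obtain ⟨hμν, hνμ⟩ := C_mul_X_add_C_comp_inverse 1 b one_ne_zero
    refine ⟨C 1 * X + C b, C 1⁻¹ * (X - C b), degree_linear one_ne_zero, hμν, hνμ,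
      B.comp (C 1 * X + C b), D, 1, one_pos, Or.inl ⟨?_, ?_⟩⟩
    · simp [hgB, mul_comp]
    · simp [hhD]
  · obtain ⟨a, c, n, B', ha, hn, hgB', hh'⟩ := exists_comp_linear_eq_and_eq_dickson hb hS hgB hhS
    obtain ⟨hμν, hνμ⟩ := C_mul_X_add_C_comp_inverse a c ha
    refine ⟨C a * X + C c, C a⁻¹ * (X - C c), degree_linear ha, hμν, hνμ, B', 1, n, hn,
      Or.inr ⟨hgB', ?_⟩⟩
    rw [hh']
    simp [mul_comp, ← mul_assoc, ← C_mul, ha]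

theorem decomp_x_sq_sub_four_mul_sq (g h p : Polynomial ℂ)
    (hg : g ≠ 0) (hh : h ≠ 0) (hp : p ≠ 0)
    (hgh : g.comp h = (Polynomial.X ^ 2 - 4) * p ^ 2) :
    ∃ μ ν : Polynomial ℂ, μ.degree = 1 ∧
      μ.comp ν = Polynomial.X ∧ ν.comp μ = Polynomial.X ∧
      ∃ (B D : Polynomial ℂ) (n : ℕ), 0 < n ∧
        ((g.comp μ = Polynomial.X * B ^ 2 ∧
            ν.comp h = (Polynomial.X ^ 2 - 4) * D ^ 2) ∨
         (g.comp μ = (Polynomial.X ^ 2 - 4) * B ^ 2 ∧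
            ν.comp h = Polynomial.dickson 1 (1 : ℂ) n)) :=
  decomp_x_sq_sub_four_mul_sq_general g h p hp hgh
end
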